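/- arXiv:2308.04916 — 8 statements merged into one kernel-verified Lean document; each statement's English description precedes it below -/
import Mathlib

section
/- Let Y be a real random variable and t > 0. If L(t) = E[exp(t|Y|)] is finite, then E[Y^2] ≤ t^{-2} (8 + 2 (log L(t))^2). -/
open MeasureTheory Real

/-! With `a = log L(t)` and `x = t|Y|`, pointwise `x² ≤ 2a² + 2(x - a)² ≤ 2a² + 4 e^{x - a}` when
`x > a` (and `x² ≤ a²` otherwise), while `E[e^{x - a}] = e^{-a} L(t) = 1`; hence `t² E[Y²] ≤ 2a² + 4`. -/

lemma Real.sq_le_two_mul_exp {u : ℝ} (hu : 0 ≤ u) : u ^ 2 ≤ 2 * exp u := by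
  have h := pow_div_factorial_le_exp u hu 2
  norm_num [Nat.factorial] at h
  linarith

lemma Real.sq_le_two_mul_sq_add_four_mul_exp_sub {x a : ℝ} (hx : 0 ≤ x) :
    x ^ 2 ≤ 2 * a ^ 2 + 4 * exp (x - a) := by
  rcases le_or_gt x a with hxa | hax
  · nlinarith [exp_pos (x - a)]
  · have := sq_le_two_mul_exp (sub_nonneg.mpr hax.le)
    nlinarith [sq_nonneg (x - 2 * a)]

theorem MeasureTheory.integral_sq_le_of_integrable_exp {Ω : Type*} [MeasurableSpace Ω]
    {μ : Measure Ω} [IsProbabilityMeasure μ] {X : Ω → ℝ} (hX : 0 ≤ᵐ[μ] X)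
    (hexp : Integrable (fun ω => exp (X ω)) μ) :
    ∫ ω, X ω ^ 2 ∂μ ≤ 2 * log (∫ ω, exp (X ω) ∂μ) ^ 2 + 4 := by
  set L := ∫ ω, exp (X ω) ∂μ
  set a := log L
  have hL : 0 < L := integral_exp_pos hexp
  set g : Ω → ℝ := fun ω => 2 * a ^ 2 + 4 * exp (-a) * exp (X ω)
  have hg : Integrable g μ := (integrable_const _).add (hexp.const_mul _)
  have hXg : ∀ᵐ ω ∂μ, X ω ^ 2 ≤ g ω := by
    filter_upwards [hX] with ω hω
    simpa only [g, mul_assoc, ← exp_add, neg_add_eq_sub] using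
      sq_le_two_mul_sq_add_four_mul_exp_sub (a := a) hω
  have hX_meas : AEStronglyMeasurable (fun ω => X ω ^ 2) μ := by
    simpa only [Function.comp_def, log_exp] using
      ((measurable_log.comp_aemeasurable hexp.aemeasurable).pow_const 2).aestronglyMeasurable
  have hX2 : Integrable (fun ω => X ω ^ 2) μ :=
    hg.mono' hX_meas (hXg.mono fun ω h => by rwa [norm_of_nonneg (sq_nonneg _)])
  have hg_int : ∫ ω, g ω ∂μ = 2 * a ^ 2 + 4 := by
    rw [integral_add (integrable_const _) (hexp.const_mul _), integral_const, integral_const_mul,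
      probReal_univ, one_smul, mul_assoc, exp_neg, exp_log hL, inv_mul_cancel₀ hL.ne', mul_one]
  exact hg_int ▸ integral_mono_ae hX2 hg hXg

/-- If `L(t) = E[exp(t|Y|)]` is finite for some `t > 0`, then
`E[Y²] ≤ t⁻²(8 + 2 (log L(t))²)`. -/
theorem second_moment_le_of_laplace {Ω : Type*} [MeasurableSpace Ω]
    (μ : Measure Ω) [IsProbabilityMeasure μ] (Y : Ω → ℝ) (t : ℝ) (ht : 0 < t)
    (hL : Integrable (fun ω => Real.exp (t * |Y ω|)) μ) :
    ∫ ω, (Y ω) ^ 2 ∂μ ≤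
      (8 + 2 * (Real.log (∫ ω, Real.exp (t * |Y ω|) ∂μ)) ^ 2) / t ^ 2 := by
  have h := integral_sq_le_of_integrable_exp (ae_of_all μ fun ω => by positivity) hL
  have hscale : ∫ ω, (t * |Y ω|) ^ 2 ∂μ = t ^ 2 * ∫ ω, Y ω ^ 2 ∂μ := by
    simp only [mul_pow, sq_abs, integral_const_mul]
  rw [hscale] at h
  rw [le_div_iff₀ (by positivity)]
  linarith
end

section
/- Let f_0 = (f_{0,lk}) with l ≥ 0, k ∈ {0,...,2^l − 1} satisfy ∑_{l≥0} 2^{r l (β + 1/2 − 1/r)} ∑_k |f_{0,lk}|^r ≤ L^r for some 1 ≤ r ≤ 2, β > 1/r − 1/2, L > 0. Fix J_0 with 2^{J_0} = n^{1/(2β+1)}. Then for any 0 < δ_n ≤ 1, the set Σ_0 = {(l,k) : |f_{0,lk}| > δ_n/√n} has cardinality at most A δ_n^{-r} 2^{J_0} for a constant A depending only on β, r, L. -/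
/-!
Write `s = β + 1/2 - 1/r > 0`, `t = δₙ/√n` and `q = 2^{-rs} < 1`. At level `l` at most `2^l`
coefficients exceed `t`, and by Markov's inequality and the Besov bound at most `L^r t^{-r} q^l`
do. Summing the first bound over `l ≤ J₀` and the second over `l > J₀` gives
`2·2^{J₀} + L^r t^{-r} q^{J₀}/(1-q)`, and the choice `2^{J₀} = n^{1/(2β+1)}` is exactly the one
for which `t^{-r} q^{J₀} = δₙ^{-r} 2^{J₀}`.
-/

open Real Finset

lemma sum_filter_le_two_pow_le (s : Finset ℕ) {J : ℝ} (hJ : 0 ≤ J) :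
    ∑ l ∈ s with ((l : ℕ) : ℝ) ≤ J, (2 : ℝ) ^ l ≤ 2 * 2 ^ J := by
  have hsub : {l ∈ s | ((l : ℕ) : ℝ) ≤ J} ⊆ range (⌊J⌋₊ + 1) := fun l hl =>
    mem_range.2 (Nat.lt_succ_of_le (Nat.le_floor (mem_filter.1 hl).2))
  calc ∑ l ∈ s with ((l : ℕ) : ℝ) ≤ J, (2 : ℝ) ^ l
      ≤ ∑ l ∈ range (⌊J⌋₊ + 1), (2 : ℝ) ^ l :=
        sum_le_sum_of_subset_of_nonneg hsub fun _ _ _ => by positivity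
    _ ≤ 2 * 2 ^ ⌊J⌋₊ := by
        rw [geom_sum_eq (by norm_num), pow_succ]
        linarith
    _ ≤ 2 * 2 ^ J := by
        rw [← rpow_natCast]
        gcongr
        · norm_num
        · exact Nat.floor_le hJ

lemma sum_range_filter_lt_pow_le {q : ℝ} (hq0 : 0 < q) (hq1 : q < 1) (J : ℝ) (M : ℕ) :
    ∑ l ∈ range M with J < ((l : ℕ) : ℝ), q ^ l ≤ q ^ J / (1 - q) := by
  have hsub : {l ∈ range M | J < ((l : ℕ) : ℝ)} ⊆ Ico ⌈J⌉₊ M := fun l hl => by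
    obtain ⟨hlM, hJl⟩ := mem_filter.1 hl
    exact mem_Ico.2 ⟨Nat.ceil_le.2 hJl.le, mem_range.1 hlM⟩
  have hq1' : 0 < 1 - q := sub_pos.2 hq1
  calc ∑ l ∈ range M with J < ((l : ℕ) : ℝ), q ^ l
      ≤ ∑ l ∈ Ico ⌈J⌉₊ M, q ^ l := sum_le_sum_of_subset_of_nonneg hsub fun _ _ _ => by positivity
    _ ≤ q ^ ⌈J⌉₊ / (1 - q) := geom_sum_Ico_le_of_lt_one hq0.le hq1
    _ ≤ q ^ J / (1 - q) := by
        rw [← rpow_natCast]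
        exact div_le_div_of_nonneg_right
          (rpow_le_rpow_of_exponent_ge hq0 hq1.le (Nat.le_ceil J)) hq1'.le

lemma sum_range_le_of_le_two_pow_of_le_mul_pow {a : ℕ → ℝ} {C q J : ℝ} (hC : 0 ≤ C)
    (hq0 : 0 < q) (hq1 : q < 1) (hJ : 0 ≤ J) (h2 : ∀ l, a l ≤ 2 ^ l)
    (hCq : ∀ l, a l ≤ C * q ^ l) (M : ℕ) :
    ∑ l ∈ range M, a l ≤ 2 * 2 ^ J + C * (q ^ J / (1 - q)) := by
  rw [← sum_filter_add_sum_filter_not (range M) fun l : ℕ => ((l : ℕ) : ℝ) ≤ J]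
  gcongr ?_ + ?_
  · exact (sum_le_sum fun l _ => h2 l).trans (sum_filter_le_two_pow_le _ hJ)
  · calc ∑ l ∈ range M with ¬((l : ℕ) : ℝ) ≤ J, a l
        ≤ ∑ l ∈ range M with ¬((l : ℕ) : ℝ) ≤ J, C * q ^ l := sum_le_sum fun l _ => hCq l
      _ = C * ∑ l ∈ range M with J < ((l : ℕ) : ℝ), q ^ l := by simp only [not_le, ← mul_sum]
      _ ≤ C * (q ^ J / (1 - q)) := by gcongr; exact sum_range_filter_lt_pow_le hq0 hq1 J M

lemma card_filter_lt_abs_le {ι : Type*} (s : Finset ι) (f : ι → ℝ) {t r : ℝ} (ht : 0 < t)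
    (hr : 0 ≤ r) : (#{k ∈ s | t < |f k|} : ℝ) ≤ t ^ (-r) * ∑ k ∈ s, |f k| ^ r := by
  have hmarkov : #{k ∈ s | t < |f k|} • t ^ r ≤ ∑ k ∈ s with t < |f k|, |f k| ^ r :=
    card_nsmul_le_sum _ _ _ fun k hk => rpow_le_rpow ht.le (mem_filter.1 hk).2.le hr
  have hsub : ∑ k ∈ s with t < |f k|, |f k| ^ r ≤ ∑ k ∈ s, |f k| ^ r :=
    sum_le_sum_of_subset_of_nonneg (filter_subset _ _) fun _ _ _ => by positivity
  rw [nsmul_eq_mul] at hmarkov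
  rw [rpow_neg ht.le, inv_mul_eq_div, le_div_iff₀ (by positivity)]
  exact hmarkov.trans hsub

lemma le_mul_pow_of_tsum_two_rpow_mul_le {b : ℕ → ℝ} {r s B : ℝ} (hb : ∀ l, 0 ≤ b l)
    (hsum : Summable fun l : ℕ => (2 : ℝ) ^ (r * l * s) * b l)
    (hB : ∑' l : ℕ, (2 : ℝ) ^ (r * l * s) * b l ≤ B) (l : ℕ) :
    b l ≤ B * ((2 : ℝ) ^ (-(r * s))) ^ l := by
  have hterm : (2 : ℝ) ^ (r * l * s) * b l ≤ B :=
    (hsum.le_tsum l fun i _ => mul_nonneg (by positivity) (hb i)).trans hB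
  have hpow : ((2 : ℝ) ^ (-(r * s))) ^ l = ((2 : ℝ) ^ (r * l * s))⁻¹ := by
    rw [← rpow_mul_natCast (by norm_num), ← rpow_neg (by norm_num)]
    ring_nf
  rw [hpow, ← div_eq_mul_inv, le_div_iff₀ (by positivity), mul_comm]
  exact hterm

lemma sqrt_rpow_mul_two_rpow_rpow_eq {n β r J : ℝ} (hn : 0 ≤ n) (hr : r ≠ 0)
    (hβ : 2 * β + 1 ≠ 0) (hJ : (2 : ℝ) ^ J = n ^ (1 / (2 * β + 1))) :
    √n ^ r * ((2 : ℝ) ^ (-(r * (β + 1 / 2 - 1 / r)))) ^ J = 2 ^ J := by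
  have hexp : 1 / 2 * r + -(r * (β + 1 / 2 - 1 / r)) * (1 / (2 * β + 1)) = 1 / (2 * β + 1) := by
    field_simp
    ring
  rw [← rpow_mul zero_le_two, mul_comm _ J, rpow_mul zero_le_two, hJ, sqrt_eq_rpow,
    ← rpow_mul hn, ← rpow_mul hn, mul_comm (1 / (2 * β + 1)),
    ← rpow_add' hn (by rw [hexp]; exact one_div_ne_zero hβ), hexp]

lemma ncard_le_sum_range_card {S : Set (ℕ × ℕ)} (σ : ℕ → Finset ℕ) {M : ℕ}
    (h : ∀ p ∈ S, p.1 < M ∧ p.2 ∈ σ p.1) : S.ncard ≤ ∑ l ∈ range M, #(σ l) := by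
  calc S.ncard ≤ #(((range M).sigma σ).image fun x => (x.1, x.2)) := by
        rw [← Set.ncard_coe_finset]
        refine Set.ncard_le_ncard (fun p hp => ?_) (finite_toSet _)
        obtain ⟨hpM, hpσ⟩ := h p hp
        simp only [coe_image, Set.mem_image, mem_coe, mem_sigma, mem_range]
        exact ⟨⟨p.1, p.2⟩, ⟨hpM, hpσ⟩, rfl⟩
    _ ≤ #((range M).sigma σ) := card_image_le
    _ = ∑ l ∈ range M, #(σ l) := card_sigma _ _

lemma ncard_abs_gt_le_of_besov {f : ℕ → ℕ → ℝ} {r s B t J : ℝ} (hr : 0 < r) (hs : 0 < s)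
    (hsum : Summable fun l : ℕ => (2 : ℝ) ^ (r * l * s) * ∑ k ∈ range (2 ^ l), |f l k| ^ r)
    (hB : ∑' l : ℕ, (2 : ℝ) ^ (r * l * s) * ∑ k ∈ range (2 ^ l), |f l k| ^ r ≤ B)
    (ht : 0 < t) (hJ : 0 ≤ J) :
    ({p : ℕ × ℕ | p.2 < 2 ^ p.1 ∧ t < |f p.1 p.2|}.ncard : ℝ) ≤
      2 * 2 ^ J + t ^ (-r) * B * (((2 : ℝ) ^ (-(r * s))) ^ J / (1 - (2 : ℝ) ^ (-(r * s)))) := by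
  set q : ℝ := 2 ^ (-(r * s))
  have hq0 : 0 < q := by positivity
  have hq1 : q < 1 := rpow_lt_one_of_one_lt_of_neg one_lt_two (neg_neg_of_pos (mul_pos hr hs))
  have hB0 : 0 ≤ B := (tsum_nonneg fun l => by positivity).trans hB
  set σ : ℕ → Finset ℕ := fun l => {k ∈ range (2 ^ l) | t < |f l k|}
  have hσ2 : ∀ l, (#(σ l) : ℝ) ≤ 2 ^ l := fun l => by
    exact_mod_cast (card_filter_le _ _).trans_eq (card_range _)
  have hσq : ∀ l, (#(σ l) : ℝ) ≤ t ^ (-r) * B * q ^ l := fun l => by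
    rw [mul_assoc]
    refine (card_filter_lt_abs_le _ _ ht hr.le).trans (mul_le_mul_of_nonneg_left ?_ (by positivity))
    exact le_mul_pow_of_tsum_two_rpow_mul_le (fun _ => by positivity) hsum hB l
  by_cases hfin : {p : ℕ × ℕ | p.2 < 2 ^ p.1 ∧ t < |f p.1 p.2|}.Finite
  · obtain ⟨M, hM⟩ := (hfin.image Prod.fst).bddAbove
    have hcount := ncard_le_sum_range_card (M := M + 1) σ fun p hp =>
      ⟨Nat.lt_succ_of_le (hM ⟨p, hp, rfl⟩), mem_filter.2 ⟨mem_range.2 hp.1, hp.2⟩⟩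
    calc _ ≤ (∑ l ∈ range (M + 1), #(σ l) : ℝ) := by exact_mod_cast hcount
      _ ≤ _ := sum_range_le_of_le_two_pow_of_le_mul_pow (by positivity) hq0 hq1 hJ hσ2 hσq _
  · have hq1' : 0 < 1 - q := sub_pos.2 hq1
    rw [Set.Infinite.ncard hfin, Nat.cast_zero]
    positivity

theorem besov_large_coeff_count_general (β r L : ℝ) (hr1 : 1 ≤ r)
    (hβ : 1 / r - 1 / 2 < β) (hL : 0 < L) :
    ∃ A : ℝ, 0 < A ∧ ∀ f₀ : ℕ → ℕ → ℝ,
      (∑' l : ℕ, (2 : ℝ) ^ (r * l * (β + 1 / 2 - 1 / r)) *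
          ∑ k ∈ Finset.range (2 ^ l), |f₀ l k| ^ r ≤ L ^ r) →
      Summable (fun l : ℕ => (2 : ℝ) ^ (r * l * (β + 1 / 2 - 1 / r)) *
          ∑ k ∈ Finset.range (2 ^ l), |f₀ l k| ^ r) →
      ∀ n : ℕ, 1 ≤ n → ∀ J₀ : ℝ, (2 : ℝ) ^ J₀ = (n : ℝ) ^ ((1 : ℝ) / (2 * β + 1)) →
      ∀ δn : ℝ, 0 < δn → δn ≤ 1 →
        (Set.ncard {p : ℕ × ℕ | p.2 < 2 ^ p.1 ∧ δn / Real.sqrt n < |f₀ p.1 p.2|} : ℝ) ≤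
          A * δn ^ (-r) * (2 : ℝ) ^ J₀ := by
  have hr0 : 0 < r := by linarith
  have hs : 0 < β + 1 / 2 - 1 / r := by linarith
  have hβ0 : 0 < 2 * β + 1 := by linarith [one_div_pos.2 hr0]
  set q : ℝ := 2 ^ (-(r * (β + 1 / 2 - 1 / r)))
  have hq1 : 0 < 1 - q := sub_pos.2 (rpow_lt_one_of_one_lt_of_neg one_lt_two (by nlinarith))
  refine ⟨2 + L ^ r / (1 - q), by positivity, ?_⟩
  intro f₀ hB hsum n hn J₀ hJ δn hδ0 hδ1
  have hn0 : (0 : ℝ) < n := by exact_mod_cast hn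
  have hJ₀ : 0 ≤ J₀ := by
    refine (rpow_le_rpow_left_iff one_lt_two).1 ?_
    rw [rpow_zero, hJ]
    exact one_le_rpow (by exact_mod_cast hn) (by positivity)
  have htail : (δn / √n) ^ (-r) * L ^ r * (q ^ J₀ / (1 - q)) =
      L ^ r / (1 - q) * δn ^ (-r) * 2 ^ J₀ := by
    rw [div_rpow hδ0.le (sqrt_nonneg _), rpow_neg (sqrt_nonneg _) r, div_inv_eq_mul,
      ← sqrt_rpow_mul_two_rpow_rpow_eq hn0.le hr0.ne' hβ0.ne' hJ]
    ring
  have hδr : 1 ≤ δn ^ (-r) := one_le_rpow_of_pos_of_le_one_of_nonpos hδ0 hδ1 (by linarith)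
  calc _ ≤ 2 * 2 ^ J₀ + (δn / √n) ^ (-r) * L ^ r * (q ^ J₀ / (1 - q)) :=
        ncard_abs_gt_le_of_besov hr0 hs hsum hB (by positivity) hJ₀
    _ ≤ (2 + L ^ r / (1 - q)) * δn ^ (-r) * 2 ^ J₀ := by
        rw [htail]
        nlinarith [rpow_pos_of_pos two_pos J₀]

/-- For `f₀` in a Besov ball `B^β_{rr}(L)` (wavelet sequence form), with
`2^{J₀} = n^{1/(2β+1)}`, the set of coefficients exceeding `δ_n/√n` has cardinality
at most `A δ_n^{-r} 2^{J₀}` with `A = A(β,r,L)`. -/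
theorem besov_large_coeff_count (β r L : ℝ) (hr1 : 1 ≤ r) (hr2 : r ≤ 2)
    (hβ : 1 / r - 1 / 2 < β) (hL : 0 < L) :
    ∃ A : ℝ, 0 < A ∧ ∀ f₀ : ℕ → ℕ → ℝ,
      (∑' l : ℕ, (2 : ℝ) ^ (r * l * (β + 1 / 2 - 1 / r)) *
          ∑ k ∈ Finset.range (2 ^ l), |f₀ l k| ^ r ≤ L ^ r) →
      Summable (fun l : ℕ => (2 : ℝ) ^ (r * l * (β + 1 / 2 - 1 / r)) *
          ∑ k ∈ Finset.range (2 ^ l), |f₀ l k| ^ r) →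
      ∀ n : ℕ, 1 ≤ n → ∀ J₀ : ℝ, (2 : ℝ) ^ J₀ = (n : ℝ) ^ ((1 : ℝ) / (2 * β + 1)) →
      ∀ δn : ℝ, 0 < δn → δn ≤ 1 →
        (Set.ncard {p : ℕ × ℕ | p.2 < 2 ^ p.1 ∧ δn / Real.sqrt n < |f₀ p.1 p.2|} : ℝ) ≤
          A * δn ^ (-r) * (2 : ℝ) ^ J₀ :=
  besov_large_coeff_count_general β r L hr1 hβ hL
end

section
/- Let f_0 ∈ B^β_{rr}(L) as a wavelet sequence, with 1 ≤ r ≤ 2, β > 1/r − 1/2, L > 0. Define J_0 by 2^{J_0} = n^{1/(2β+1)} and J_1 by 2^{J_1} = n^{(β/(2β+1))·(1/β')} with β' = β − (1/r − 1/2)_+. Then there is a constant A = A(β, r, L) with ∑_{l ≤ J_1, k} f_{0,lk}^2 1{|f_{0,lk}| ≤ 1/√n} + ∑_{l > J_1, k} f_{0,lk}^2 ≤ A n^{-2β/(2β+1)}. -/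
/-!
At level `l` the Besov condition gives `‖f_l‖_r ≤ L 2^{-lσ}` with `σ = β + 1/2 - 1/r > 0`.
For `|x| ≤ t` one has `x² ≤ t^{2-r} |x|^r`, so the coefficients below the threshold `t = n^{-1/2}`
carry energy at most `min (2^l t², t^{2-r} L^r 2^{-lrσ})` at level `l`; summing the first bound
up to the level `2^M ≈ n^{1/(2β+1)}` and the second one beyond it gives two geometric sums of
order `n^{-2β/(2β+1)}`. Applying the same inequality with `t = ‖f_l‖_r` yields `ℓ^r ⊂ ℓ²`, so
the energy at level `l` is at most `L² 2^{-2lσ}`, and its tail beyond `J₁` is of order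
`2^{-2J₁σ} = n^{-2β/(2β+1)}`.
-/

open Real Finset

section Thresholding

variable {ι : Type*} {s : Finset ι} {a : ι → ℝ} {r t : ℝ}

lemma sq_le_rpow_mul_abs_rpow {x : ℝ} (hx : |x| ≤ t) (hr : r ≤ 2) :
    x ^ 2 ≤ t ^ (2 - r) * |x| ^ r := by
  rcases eq_or_ne x 0 with rfl | hx0
  · have ht : 0 ≤ t := (abs_nonneg 0).trans hx
    rw [zero_pow two_ne_zero]
    positivity
  · calc x ^ 2 = |x| ^ (2 - r) * |x| ^ r := by
          rw [← rpow_add (abs_pos.2 hx0), sub_add_cancel, rpow_two, sq_abs]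
      _ ≤ t ^ (2 - r) * |x| ^ r := by gcongr

lemma sum_ite_sq_le_card_mul {p : ι → Prop} [DecidablePred p] (hp : ∀ i, p i → |a i| ≤ t) :
    ∑ i ∈ s, (if p i then a i ^ 2 else 0) ≤ #s * t ^ 2 := by
  rw [← nsmul_eq_mul]
  refine sum_le_card_nsmul _ _ _ fun i _ => ?_
  split_ifs with h
  · exact sq_le_sq' (abs_le.1 (hp i h)).1 (abs_le.1 (hp i h)).2
  · positivity

lemma sum_ite_sq_le_rpow_mul {p : ι → Prop} [DecidablePred p] (hp : ∀ i, p i → |a i| ≤ t)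
    (ht : 0 ≤ t) (hr : r ≤ 2) :
    ∑ i ∈ s, (if p i then a i ^ 2 else 0) ≤ t ^ (2 - r) * ∑ i ∈ s, |a i| ^ r := by
  rw [mul_sum]
  refine sum_le_sum fun i _ => ?_
  split_ifs with h
  · exact sq_le_rpow_mul_abs_rpow (hp i h) hr
  · positivity

lemma sum_sq_le_sq_of_sum_abs_rpow_le {u : ℝ} (hr0 : 0 < r) (hr2 : r ≤ 2) (hu : 0 ≤ u)
    (h : ∑ i ∈ s, |a i| ^ r ≤ u ^ r) : ∑ i ∈ s, a i ^ 2 ≤ u ^ 2 := by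
  have habs : ∀ i ∈ s, |a i| ≤ u := fun i hi =>
    (rpow_le_rpow_iff (abs_nonneg _) hu hr0).1
      ((single_le_sum (fun j _ => by positivity) hi).trans h)
  calc ∑ i ∈ s, a i ^ 2 ≤ ∑ i ∈ s, u ^ (2 - r) * |a i| ^ r :=
        sum_le_sum fun i hi => sq_le_rpow_mul_abs_rpow (habs i hi) hr2
    _ ≤ u ^ (2 - r) * u ^ r := by rw [← mul_sum]; gcongr
    _ = u ^ 2 := by
        rw [← rpow_add' hu (by rw [sub_add_cancel]; norm_num), sub_add_cancel, rpow_two]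

end Thresholding

section Geometric

variable {F : ℕ → ℝ} {b ρ : ℝ}

lemma tsum_le_sum_range_add_geometric (m : ℕ) (hF0 : ∀ l, 0 ≤ F l) (hρ0 : 0 ≤ ρ) (hρ1 : ρ < 1)
    (hF : ∀ l, m ≤ l → F l ≤ b * ρ ^ l) :
    ∑' l, F l ≤ ∑ l ∈ range m, F l + b * ρ ^ m / (1 - ρ) := by
  have hshift : ∀ l, F (l + m) ≤ b * ρ ^ m * ρ ^ l := fun l =>
    (hF _ (Nat.le_add_left m l)).trans_eq (by ring)
  have hgeom : Summable fun l => b * ρ ^ m * ρ ^ l :=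
    (summable_geometric_of_lt_one hρ0 hρ1).mul_left _
  have htail : Summable fun l => F (l + m) := hgeom.of_nonneg_of_le (fun l => hF0 _) hshift
  rw [← ((summable_nat_add_iff m).1 htail).sum_add_tsum_nat_add m]
  gcongr
  calc ∑' l, F (l + m) ≤ ∑' l, b * ρ ^ m * ρ ^ l := htail.tsum_le_tsum hshift hgeom
    _ = b * ρ ^ m / (1 - ρ) := by
        rw [tsum_mul_left, tsum_geometric_of_lt_one hρ0 hρ1, div_eq_mul_inv]

lemma tsum_le_of_le_two_pow_of_le_geometric {c : ℝ} (M : ℕ) (hF0 : ∀ l, 0 ≤ F l) (hρ0 : 0 ≤ ρ)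
    (hρ1 : ρ < 1) (hgrow : ∀ l, F l ≤ c * 2 ^ l) (hdecay : ∀ l, F l ≤ b * ρ ^ l) :
    ∑' l, F l ≤ c * 2 ^ (M + 1) + b * ρ ^ (M + 1) / (1 - ρ) := by
  have hc : 0 ≤ c := by simpa using (hF0 0).trans (hgrow 0)
  refine (tsum_le_sum_range_add_geometric (M + 1) hF0 hρ0 hρ1 fun l _ => hdecay l).trans ?_
  gcongr
  calc ∑ l ∈ range (M + 1), F l ≤ ∑ l ∈ range (M + 1), c * 2 ^ l := sum_le_sum fun l _ => hgrow l
    _ ≤ c * 2 ^ (M + 1) := by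
        have := geom_sum_eq (x := (2 : ℝ)) (by norm_num) (M + 1)
        rw [← mul_sum]
        gcongr
        norm_num at this
        linarith

end Geometric

section Besov

variable {f : ℕ → ℕ → ℝ} {r σ L ρ : ℝ}

lemma level_sum_le_of_besov (hL : 0 ≤ L)
    (hsum : Summable fun l : ℕ => (2 : ℝ) ^ (r * l * σ) * ∑ k ∈ range (2 ^ l), |f l k| ^ r)
    (hbes : ∑' l : ℕ, (2 : ℝ) ^ (r * l * σ) * ∑ k ∈ range (2 ^ l), |f l k| ^ r ≤ L ^ r)
    (l : ℕ) : ∑ k ∈ range (2 ^ l), |f l k| ^ r ≤ (L * (2 ^ (-σ)) ^ l) ^ r := by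
  have hterm : (2 : ℝ) ^ (r * l * σ) * ∑ k ∈ range (2 ^ l), |f l k| ^ r ≤ L ^ r :=
    (hsum.le_tsum l fun j _ => by positivity).trans hbes
  have hdecay : (((2 : ℝ) ^ (-σ)) ^ l) ^ r = ((2 : ℝ) ^ (r * l * σ))⁻¹ := by
    rw [← rpow_mul_natCast, ← rpow_mul, ← rpow_neg] <;> first | positivity | ring_nf
  rw [mul_rpow hL (by positivity), hdecay, ← div_eq_mul_inv, le_div_iff₀ (by positivity)]
  linarith

lemma tsum_thresholded_energy_le {p : ℕ → ℕ → Prop} [∀ l k, Decidable (p l k)] {t : ℝ}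
    (hr0 : 0 < r) (hr2 : r ≤ 2) (hL : 0 ≤ L) (hρ0 : 0 ≤ ρ) (hρ1 : ρ < 1) (ht : 0 ≤ t)
    (hlevel : ∀ l, ∑ k ∈ range (2 ^ l), |f l k| ^ r ≤ (L * ρ ^ l) ^ r)
    (hp : ∀ l k, p l k → |f l k| ≤ t) (M : ℕ) :
    ∑' l, ∑ k ∈ range (2 ^ l), (if p l k then f l k ^ 2 else 0) ≤
      t ^ 2 * 2 ^ (M + 1) + t ^ (2 - r) * L ^ r * (ρ ^ r) ^ (M + 1) / (1 - ρ ^ r) := by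
  refine tsum_le_of_le_two_pow_of_le_geometric M (fun l => ?_) (by positivity)
    (rpow_lt_one hρ0 hρ1 hr0) (fun l => ?_) (fun l => ?_)
  · exact sum_nonneg fun k _ => by split_ifs <;> positivity
  · simpa [mul_comm] using sum_ite_sq_le_card_mul (s := range (2 ^ l)) (hp l)
  · calc _ ≤ t ^ (2 - r) * ∑ k ∈ range (2 ^ l), |f l k| ^ r :=
          sum_ite_sq_le_rpow_mul (hp l) ht hr2
      _ ≤ t ^ (2 - r) * (L * ρ ^ l) ^ r := by gcongr; exact hlevel l
      _ = t ^ (2 - r) * L ^ r * (ρ ^ r) ^ l := by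
          rw [mul_rpow hL (by positivity), rpow_pow_comm hρ0]; ring

lemma tsum_energy_above_le {J : ℝ} (hr0 : 0 < r) (hr2 : r ≤ 2) (hL : 0 ≤ L) (hρ0 : 0 ≤ ρ)
    (hρ1 : ρ < 1) (hlevel : ∀ l, ∑ k ∈ range (2 ^ l), |f l k| ^ r ≤ (L * ρ ^ l) ^ r) :
    ∑' l : ℕ, ∑ k ∈ range (2 ^ l), (if J < l then f l k ^ 2 else 0) ≤
      L ^ 2 * (ρ ^ 2) ^ ⌈J⌉₊ / (1 - ρ ^ 2) := by
  have hbelow : ∑ l ∈ range ⌈J⌉₊, ∑ k ∈ range (2 ^ l), (if J < l then f l k ^ 2 else 0) = 0 :=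
    sum_eq_zero fun l hl => sum_eq_zero fun k _ =>
      if_neg (not_lt.2 (Nat.lt_ceil.1 (mem_range.1 hl)).le)
  refine (tsum_le_sum_range_add_geometric ⌈J⌉₊ (fun l => ?_) (by positivity)
    (pow_lt_one₀ hρ0 hρ1 two_ne_zero) fun l _ => ?_).trans_eq (by rw [hbelow, zero_add])
  · exact sum_nonneg fun k _ => by split_ifs <;> positivity
  · calc _ ≤ ∑ k ∈ range (2 ^ l), f l k ^ 2 :=
          sum_le_sum fun k _ => by split_ifs <;> simp [sq_nonneg]
      _ ≤ (L * ρ ^ l) ^ 2 := sum_sq_le_sq_of_sum_abs_rpow_le hr0 hr2 (by positivity) (hlevel l)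
      _ = L ^ 2 * (ρ ^ 2) ^ l := by ring

lemma inv_sqrt_sq_mul_two_pow_succ_le {β : ℝ} {n M : ℕ} (hs : 0 < 2 * β + 1) (hn : 1 ≤ n)
    (hM : (2 : ℝ) ^ M ≤ (n : ℝ) ^ (1 / (2 * β + 1))) :
    (1 / √(n : ℝ)) ^ 2 * 2 ^ (M + 1) ≤ 2 * (n : ℝ) ^ (-(2 * β) / (2 * β + 1)) := by
  have hn0 : (0 : ℝ) < n := by exact_mod_cast hn
  calc (1 / √(n : ℝ)) ^ 2 * 2 ^ (M + 1) = 2 * 2 ^ M / n := by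
        rw [div_pow, one_pow, sq_sqrt hn0.le]; ring
    _ ≤ 2 * (n : ℝ) ^ (1 / (2 * β + 1)) / n := by gcongr
    _ = 2 * (n : ℝ) ^ (-(2 * β) / (2 * β + 1)) := by
        rw [mul_div_assoc, ← rpow_sub_one hn0.ne']; congr 2; field_simp; ring

lemma inv_sqrt_rpow_mul_geometric_succ_le {β : ℝ} {n M : ℕ} (hr0 : 0 < r)
    (hs : 0 < 2 * β + 1) (hσ : 0 < β + 1 / 2 - 1 / r) (hn : 1 ≤ n)
    (hM : (n : ℝ) ^ (1 / (2 * β + 1)) < 2 ^ (M + 1)) :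
    (1 / √(n : ℝ)) ^ (2 - r) * (((2 : ℝ) ^ (-(β + 1 / 2 - 1 / r))) ^ r) ^ (M + 1) ≤
      (n : ℝ) ^ (-(2 * β) / (2 * β + 1)) := by
  have hn0 : (0 : ℝ) < n := by exact_mod_cast hn
  have hsqrt : 1 / √(n : ℝ) = (n : ℝ) ^ (-(1 / 2 : ℝ)) := by
    rw [sqrt_eq_rpow, rpow_neg hn0.le, one_div]
  have hN : ((2 : ℝ) ^ (M + 1)) ^ (-(β + 1 / 2 - 1 / r)) ≤
      ((n : ℝ) ^ (1 / (2 * β + 1))) ^ (-(β + 1 / 2 - 1 / r)) :=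
    rpow_le_rpow_of_nonpos (rpow_pos_of_pos hn0 _) hM.le (neg_nonpos.2 hσ.le)
  rw [rpow_pow_comm (by positivity), rpow_pow_comm zero_le_two, hsqrt]
  calc ((n : ℝ) ^ (-(1 / 2 : ℝ))) ^ (2 - r) * (((2 : ℝ) ^ (M + 1)) ^ (-(β + 1 / 2 - 1 / r))) ^ r
      ≤ ((n : ℝ) ^ (-(1 / 2 : ℝ))) ^ (2 - r) *
          (((n : ℝ) ^ (1 / (2 * β + 1))) ^ (-(β + 1 / 2 - 1 / r))) ^ r := by gcongr
    _ = (n : ℝ) ^ (-(2 * β) / (2 * β + 1)) := by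
        rw [← rpow_mul hn0.le, ← rpow_mul hn0.le, ← rpow_mul hn0.le, ← rpow_add hn0]
        congr 1
        field_simp
        ring

lemma tsum_thresholded_energy_le_rate {β J : ℝ} {n : ℕ} (hr0 : 0 < r) (hr2 : r ≤ 2)
    (hσ : 0 < β + 1 / 2 - 1 / r) (hL : 0 ≤ L) (hn : 1 ≤ n)
    (hlevel : ∀ l, ∑ k ∈ range (2 ^ l), |f l k| ^ r ≤
      (L * ((2 : ℝ) ^ (-(β + 1 / 2 - 1 / r))) ^ l) ^ r) :
    ∑' l : ℕ, ∑ k ∈ range (2 ^ l),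
        (if (l : ℝ) ≤ J ∧ |f l k| ≤ 1 / √n then f l k ^ 2 else 0) ≤
      (2 + L ^ r / (1 - ((2 : ℝ) ^ (-(β + 1 / 2 - 1 / r))) ^ r)) *
        (n : ℝ) ^ (-(2 * β) / (2 * β + 1)) := by
  have hs : 0 < 2 * β + 1 := by linarith [one_div_le_one_div_of_le hr0 hr2]
  have hρ1 : (2 : ℝ) ^ (-(β + 1 / 2 - 1 / r)) < 1 :=
    rpow_lt_one_of_one_lt_of_neg one_lt_two (by linarith)
  have hρr : 0 < 1 - ((2 : ℝ) ^ (-(β + 1 / 2 - 1 / r))) ^ r :=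
    sub_pos.2 (rpow_lt_one (by positivity) hρ1 hr0)
  -- the crossover level `2 ^ M ≈ n ^ (1 / (2β + 1))` balances the two per-level bounds
  obtain ⟨M, hM, hM1⟩ := exists_nat_pow_near
    (one_le_rpow (by exact_mod_cast hn) (by positivity) : (1 : ℝ) ≤ n ^ (1 / (2 * β + 1)))
    one_lt_two
  have hdecay : (1 / √(n : ℝ)) ^ (2 - r) * L ^ r * (((2 : ℝ) ^ (-(β + 1 / 2 - 1 / r))) ^ r) ^ (M + 1)
      ≤ L ^ r * (n : ℝ) ^ (-(2 * β) / (2 * β + 1)) := by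
    rw [mul_comm _ (L ^ r), mul_assoc]
    exact mul_le_mul_of_nonneg_left (inv_sqrt_rpow_mul_geometric_succ_le hr0 hs hσ hn hM1)
      (by positivity)
  calc _ ≤ _ := tsum_thresholded_energy_le hr0 hr2 hL (by positivity) hρ1 (by positivity)
          hlevel (fun l k h => h.2) M
    _ ≤ 2 * (n : ℝ) ^ (-(2 * β) / (2 * β + 1)) +
          L ^ r * (n : ℝ) ^ (-(2 * β) / (2 * β + 1)) /
            (1 - ((2 : ℝ) ^ (-(β + 1 / 2 - 1 / r))) ^ r) := by
        have hgrow := inv_sqrt_sq_mul_two_pow_succ_le hs hn hM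
        gcongr
    _ = _ := by ring

lemma tsum_energy_above_le_rate {e J : ℝ} {n : ℕ} (hr0 : 0 < r) (hr2 : r ≤ 2)
    (hσ : 0 < σ) (hL : 0 ≤ L) (hJ : (2 : ℝ) ^ J = (n : ℝ) ^ (e * (1 / σ)))
    (hlevel : ∀ l, ∑ k ∈ range (2 ^ l), |f l k| ^ r ≤ (L * ((2 : ℝ) ^ (-σ)) ^ l) ^ r) :
    ∑' l : ℕ, ∑ k ∈ range (2 ^ l), (if J < l then f l k ^ 2 else 0) ≤
      L ^ 2 / (1 - ((2 : ℝ) ^ (-σ)) ^ 2) * (n : ℝ) ^ (-(2 * e)) := by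
  have hρ1 : (2 : ℝ) ^ (-σ) < 1 := rpow_lt_one_of_one_lt_of_neg one_lt_two (by linarith)
  have hρ2 : 0 < 1 - ((2 : ℝ) ^ (-σ)) ^ 2 := sub_pos.2 (pow_lt_one₀ (by positivity) hρ1 two_ne_zero)
  have hceil : ((2 : ℝ) ^ (-σ)) ^ ⌈J⌉₊ ≤ (n : ℝ) ^ (-e) :=
    calc ((2 : ℝ) ^ (-σ)) ^ ⌈J⌉₊ = ((2 : ℝ) ^ (⌈J⌉₊ : ℝ)) ^ (-σ) := by
          rw [rpow_pow_comm zero_le_two, rpow_natCast]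
      _ ≤ ((2 : ℝ) ^ J) ^ (-σ) :=
          rpow_le_rpow_of_nonpos (by positivity)
            (rpow_le_rpow_of_exponent_le one_le_two (Nat.le_ceil J)) (by linarith)
      _ = (n : ℝ) ^ (-e) := by
          rw [hJ, ← rpow_mul (Nat.cast_nonneg n)]; congr 1; field_simp
  calc _ ≤ L ^ 2 * (((2 : ℝ) ^ (-σ)) ^ 2) ^ ⌈J⌉₊ / (1 - ((2 : ℝ) ^ (-σ)) ^ 2) :=
        tsum_energy_above_le hr0 hr2 hL (by positivity) hρ1 hlevel
    _ ≤ L ^ 2 * ((n : ℝ) ^ (-e)) ^ 2 / (1 - ((2 : ℝ) ^ (-σ)) ^ 2) := by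
        rw [← pow_mul, mul_comm 2, pow_mul]; gcongr
    _ = L ^ 2 / (1 - ((2 : ℝ) ^ (-σ)) ^ 2) * (n : ℝ) ^ (-(2 * e)) := by
        rw [← rpow_natCast ((n : ℝ) ^ (-e)), ← rpow_mul (Nat.cast_nonneg n)]; push_cast; ring_nf

end Besov

/-- For `f₀ ∈ B^β_{rr}(L)`, with `2^{J₀} = n^{1/(2β+1)}` and
`2^{J₁} = n^{(β/(2β+1))/β'}`, `β' = β − (1/r − 1/2)₊`, the sum of squares of small
coefficients at levels `l ≤ J₁` plus the full energy at levels `l > J₁` is at most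
`A n^{-2β/(2β+1)}`. -/
theorem besov_small_coeff_energy (β r L : ℝ) (hr1 : 1 ≤ r) (hr2 : r ≤ 2)
    (hβ : 1 / r - 1 / 2 < β) (hL : 0 < L) :
    ∃ A : ℝ, 0 < A ∧ ∀ f₀ : ℕ → ℕ → ℝ,
      (∑' l : ℕ, (2 : ℝ) ^ (r * l * (β + 1 / 2 - 1 / r)) *
          ∑ k ∈ Finset.range (2 ^ l), |f₀ l k| ^ r ≤ L ^ r) →
      Summable (fun l : ℕ => (2 : ℝ) ^ (r * l * (β + 1 / 2 - 1 / r)) *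
          ∑ k ∈ Finset.range (2 ^ l), |f₀ l k| ^ r) →
      ∀ n : ℕ, 1 ≤ n → ∀ J₁ : ℝ,
        (2 : ℝ) ^ J₁ = (n : ℝ) ^ ((β / (2 * β + 1)) * (1 / (β - max (1 / r - 1 / 2) 0))) →
        (∑' l : ℕ, ∑ k ∈ Finset.range (2 ^ l),
            (if (l : ℝ) ≤ J₁ ∧ |f₀ l k| ≤ 1 / Real.sqrt n then (f₀ l k) ^ 2 else 0)) +
          (∑' l : ℕ, ∑ k ∈ Finset.range (2 ^ l),
            (if J₁ < (l : ℝ) then (f₀ l k) ^ 2 else 0)) ≤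
          A * (n : ℝ) ^ (-(2 * β) / (2 * β + 1)) := by
  have hr0 : 0 < r := by linarith
  have hσ : 0 < β + 1 / 2 - 1 / r := by linarith
  have hρ : (2 : ℝ) ^ (-(β + 1 / 2 - 1 / r)) < 1 :=
    rpow_lt_one_of_one_lt_of_neg one_lt_two (by linarith)
  have hρr : 0 < 1 - ((2 : ℝ) ^ (-(β + 1 / 2 - 1 / r))) ^ r :=
    sub_pos.2 (rpow_lt_one (by positivity) hρ hr0)
  have hρ2 : 0 < 1 - ((2 : ℝ) ^ (-(β + 1 / 2 - 1 / r))) ^ 2 :=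
    sub_pos.2 (pow_lt_one₀ (by positivity) hρ two_ne_zero)
  refine ⟨2 + L ^ r / (1 - ((2 : ℝ) ^ (-(β + 1 / 2 - 1 / r))) ^ r) +
    L ^ 2 / (1 - ((2 : ℝ) ^ (-(β + 1 / 2 - 1 / r))) ^ 2), by positivity, ?_⟩
  intro f₀ hbes hsum n hn J₁ hJ₁
  have hlevel := level_sum_le_of_besov hL.le hsum hbes
  have hβ' : β - max (1 / r - 1 / 2) 0 = β + 1 / 2 - 1 / r := by
    rw [max_eq_left (by linarith [one_div_le_one_div_of_le hr0 hr2])]; ring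
  rw [hβ'] at hJ₁
  calc _ ≤ _ + _ := add_le_add (tsum_thresholded_energy_le_rate hr0 hr2 hσ hL.le hn hlevel)
        (tsum_energy_above_le_rate hr0 hr2 hσ hL.le hJ₁ hlevel)
    _ = _ := by ring_nf
end

section
/- Consider the normal model X | θ ~ N(θ, 1/n) with prior θ = σ ζ, where σ > 0 and ζ has density h on ℝ which is symmetric, positive, bounded, decreasing on [0,∞) and satisfies log(1/h(x)) ≤ c_1(1 + log^{1+κ}(1+x)) for x ≥ 0 and some c_1 > 0, κ ≥ 0. Then there exist constants C, C_1 > 0 such that for all t ∈ ℝ, θ_0 ∈ ℝ, σ > 0, the prior-posterior Laplace transform satisfies log E_{θ_0} E^π[exp(t √n (θ − X)) | X] ≤ t^2/2 + C log^{1+κ}(1 + (|θ_0| + 1/√n)/σ) + C_1, where E_{θ_0} is the expectation over X ~ N(θ_0, 1/n). -/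
open Real MeasureTheory

/-- The standard normal density. -/
noncomputable def stdGaussPdf (x : ℝ) : ℝ := Real.exp (-x ^ 2 / 2) / Real.sqrt (2 * Real.pi)

/-!
Fix `x` and write `s = √n`, `φ = stdGaussPdf`. Completing the square bounds the numerator of the
posterior Laplace transform by `e^{t²/2} h(0) / s`, and restricting the denominator to
`|θ - x| ≤ 1/s` bounds it below by `2 φ(1) h((|x| + 1/s)/σ) / s`. Since `log (1 + (|x| + 1/s)/σ)`
is at most `log (1 + (|θ₀| + 1/s)/σ) + log (1 + s|x - θ₀|)` and `log^{1+κ} (1 + w)` grows at most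
linearly in `w`, the tail condition gives `1 / h((|x| + 1/s)/σ) ≤ exp (C L + K + s²(x - θ₀)²/4)`
with `L = log^{1+κ} (1 + (|θ₀| + 1/s)/σ)`. The factor `exp (s²(x - θ₀)²/4)` has integral `√2`
against the `N(θ₀, 1/s²)` density.
-/

open Set ProbabilityTheory

lemma stdGaussPdf_eq_gaussianPDFReal : stdGaussPdf = gaussianPDFReal 0 1 := by
  ext x; simp [stdGaussPdf, gaussianPDFReal, div_eq_inv_mul]

lemma stdGaussPdf_pos (x : ℝ) : 0 < stdGaussPdf x := by
  rw [stdGaussPdf_eq_gaussianPDFReal]; exact gaussianPDFReal_pos _ _ _ one_ne_zero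

lemma integrable_stdGaussPdf : Integrable stdGaussPdf := by
  rw [stdGaussPdf_eq_gaussianPDFReal]; exact integrable_gaussianPDFReal 0 1

lemma integral_stdGaussPdf : ∫ x, stdGaussPdf x = 1 := by
  rw [stdGaussPdf_eq_gaussianPDFReal]; exact integral_gaussianPDFReal_eq_one 0 one_ne_zero

lemma stdGaussPdf_neg (x : ℝ) : stdGaussPdf (-x) = stdGaussPdf x := by
  simp [stdGaussPdf]

lemma stdGaussPdf_mul_sub_comm (s x y : ℝ) :
    stdGaussPdf (s * (x - y)) = stdGaussPdf (s * (y - x)) := by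
  rw [← stdGaussPdf_neg]; ring_nf

lemma exp_mul_mul_stdGaussPdf (t u : ℝ) :
    exp (t * u) * stdGaussPdf u = exp (t ^ 2 / 2) * stdGaussPdf (u - t) := by
  simp only [stdGaussPdf, ← mul_div_assoc, ← exp_add]; ring_nf

lemma stdGaussPdf_one_le {u : ℝ} (hu : |u| ≤ 1) : stdGaussPdf 1 ≤ stdGaussPdf u := by
  have : u ^ 2 ≤ 1 := by nlinarith [sq_abs u, abs_nonneg u]
  unfold stdGaussPdf
  exact div_le_div_of_nonneg_right (exp_le_exp.2 (by linarith)) (sqrt_nonneg _)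

lemma stdGaussPdf_mul_exp_sq_div_four (u : ℝ) :
    stdGaussPdf u * exp (u ^ 2 / 4) = exp (-(1 / 4) * u ^ 2) / √(2 * π) := by
  rw [stdGaussPdf, div_mul_eq_mul_div, ← exp_add]; ring_nf

lemma integrable_stdGaussPdf_mul_exp_sq_div_four :
    Integrable fun u => stdGaussPdf u * exp (u ^ 2 / 4) := by
  simp only [stdGaussPdf_mul_exp_sq_div_four]
  exact (integrable_exp_neg_mul_sq (by norm_num)).div_const _

lemma integral_stdGaussPdf_mul_exp_sq_div_four :
    ∫ u, stdGaussPdf u * exp (u ^ 2 / 4) = √2 := by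
  simp only [stdGaussPdf_mul_exp_sq_div_four]
  rw [integral_div, integral_gaussian, show π / (1 / 4) = 2 * (2 * π) by ring, sqrt_mul zero_le_two,
    mul_div_assoc, div_self (by positivity), mul_one]

section Substitution

variable {E : Type*} [NormedAddCommGroup E]

lemma MeasureTheory.Integrable.comp_mul_sub {f : ℝ → E} (hf : Integrable f) {s : ℝ} (hs : s ≠ 0)
    (c : ℝ) : Integrable fun x => f (s * (x - c)) :=
  (hf.comp_mul_left' hs).comp_sub_right c

lemma integral_comp_mul_sub [NormedSpace ℝ E] (f : ℝ → E) {s : ℝ} (hs : 0 < s) (c : ℝ) :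
    ∫ x, f (s * (x - c)) = s⁻¹ • ∫ u, f u := by
  rw [integral_sub_right_eq_self (fun x => f (s * x)) c, Measure.integral_comp_mul_left,
    abs_of_pos (inv_pos.2 hs)]

end Substitution

lemma integral_mul_stdGaussPdf_le {R : ℝ → ℝ} {s D θ₀ : ℝ} (hs : 0 < s) (hR0 : ∀ x, 0 ≤ R x)
    (hR : ∀ x, R x ≤ D * exp ((s * (x - θ₀)) ^ 2 / 4)) :
    ∫ x, s * stdGaussPdf (s * (x - θ₀)) * R x ≤ √2 * D := by
  set ψ : ℝ → ℝ := fun u => stdGaussPdf u * exp (u ^ 2 / 4)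
  have hint : Integrable fun x => s * D * ψ (s * (x - θ₀)) :=
    (integrable_stdGaussPdf_mul_exp_sq_div_four.comp_mul_sub hs.ne' θ₀).const_mul _
  calc ∫ x, s * stdGaussPdf (s * (x - θ₀)) * R x
      ≤ ∫ x, s * D * ψ (s * (x - θ₀)) := by
        refine integral_mono_of_nonneg (.of_forall fun x => ?_) hint (.of_forall fun x => ?_)
        · have := stdGaussPdf_pos (s * (x - θ₀)); have := hR0 x; positivity
        · calc s * stdGaussPdf (s * (x - θ₀)) * R x
              ≤ s * stdGaussPdf (s * (x - θ₀)) * (D * exp ((s * (x - θ₀)) ^ 2 / 4)) := by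
                have := stdGaussPdf_pos (s * (x - θ₀)); gcongr; exact hR x
            _ = s * D * ψ (s * (x - θ₀)) := by ring
    _ = √2 * D := by
        rw [integral_const_mul, integral_comp_mul_sub ψ hs,
          integral_stdGaussPdf_mul_exp_sq_div_four, smul_eq_mul]
        field_simp

namespace Function.Even

variable {α β : Type*} [AddCommGroup α] [LinearOrder α] {f : α → β}

lemma apply_abs (hf : f.Even) (x : α) : f |x| = f x := by
  rcases abs_choice x with hx | hx <;> rw [hx]
  exact hf x

lemma apply_le_of_abs_le [IsOrderedAddMonoid α] [Preorder β] (hf : f.Even)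
    (hmono : AntitoneOn f (Ici 0)) {x y : α} (hxy : |x| ≤ y) : f y ≤ f x := by
  rw [← hf.apply_abs x]
  exact hmono (abs_nonneg x) ((abs_nonneg x).trans hxy) hxy

lemma apply_le_apply_zero [IsOrderedAddMonoid α] [Preorder β] (hf : f.Even)
    (hmono : AntitoneOn f (Ici 0)) (x : α) : f x ≤ f 0 := by
  simpa [hf.apply_abs] using hf.apply_le_of_abs_le hmono (x := 0) (y := |x|) (by simp)

lemma measurable_of_antitoneOn {h : ℝ → ℝ} (hh : h.Even) (hmono : AntitoneOn h (Ici 0)) :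
    Measurable h := by
  have hanti : Antitone fun y => h (max y 0) := fun y z hyz =>
    hmono (le_max_right y 0) (le_max_right z 0) (max_le_max_right 0 hyz)
  have hcomp : h = (fun y => h (max y 0)) ∘ abs := funext fun x => by simp [hh.apply_abs]
  rw [hcomp]
  exact hanti.measurable.comp measurable_abs

end Function.Even

/-- `E^π[exp (t s (θ - x)) | X = x]` for the prior density `θ ↦ h (θ / σ) / σ` and the likelihood
`θ ↦ s φ (s (x - θ))`, with `s = √n`; the normalising factors cancel in the ratio. -/
noncomputable def posteriorLaplace (h : ℝ → ℝ) (σ s t x : ℝ) : ℝ :=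
  (∫ θ, exp (t * s * (θ - x)) * stdGaussPdf (s * (x - θ)) * h (θ / σ)) /
    ∫ θ, stdGaussPdf (s * (x - θ)) * h (θ / σ)

section Posterior

variable {h : ℝ → ℝ} {σ s : ℝ}

lemma integral_exp_mul_stdGaussPdf_mul_le (hh : h.Even) (hmono : AntitoneOn h (Ici 0))
    (hnn : ∀ x, 0 ≤ h x) (hs : 0 < s) (t x : ℝ) :
    ∫ θ, exp (t * s * (θ - x)) * stdGaussPdf (s * (x - θ)) * h (θ / σ) ≤
      exp (t ^ 2 / 2) * h 0 / s := by
  set f : ℝ → ℝ := fun u => exp (t ^ 2 / 2) * h 0 * stdGaussPdf (u - t)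
  have hf : Integrable f := (integrable_stdGaussPdf.comp_sub_right t).const_mul _
  have hle (θ : ℝ) :
      exp (t * s * (θ - x)) * stdGaussPdf (s * (x - θ)) * h (θ / σ) ≤ f (s * (θ - x)) := by
    have := stdGaussPdf_pos (s * (θ - x) - t)
    calc exp (t * s * (θ - x)) * stdGaussPdf (s * (x - θ)) * h (θ / σ)
        = exp (t ^ 2 / 2) * stdGaussPdf (s * (θ - x) - t) * h (θ / σ) := by
          rw [stdGaussPdf_mul_sub_comm, mul_assoc t, exp_mul_mul_stdGaussPdf]
      _ ≤ exp (t ^ 2 / 2) * stdGaussPdf (s * (θ - x) - t) * h 0 := by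
          gcongr; exact hh.apply_le_apply_zero hmono _
      _ = f (s * (θ - x)) := by ring
  calc ∫ θ, exp (t * s * (θ - x)) * stdGaussPdf (s * (x - θ)) * h (θ / σ)
      ≤ ∫ θ, f (s * (θ - x)) :=
        integral_mono_of_nonneg (.of_forall fun θ => by
          have := stdGaussPdf_pos (s * (x - θ)); have := hnn (θ / σ); positivity)
          (hf.comp_mul_sub hs.ne' x) (.of_forall hle)
    _ = exp (t ^ 2 / 2) * h 0 / s := by
        rw [integral_comp_mul_sub f hs, integral_const_mul, integral_sub_right_eq_self,
          integral_stdGaussPdf, smul_eq_mul]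
        field_simp

lemma integrable_stdGaussPdf_mul_comp_div (hh : h.Even) (hmono : AntitoneOn h (Ici 0))
    (hnn : ∀ x, 0 ≤ h x) (hs : s ≠ 0) (x : ℝ) :
    Integrable fun θ => stdGaussPdf (s * (x - θ)) * h (θ / σ) := by
  refine ((integrable_stdGaussPdf.comp_mul_sub hs x).mul_const (h 0)).mono' ?_
    (.of_forall fun θ => ?_)
  · exact ((by unfold stdGaussPdf; fun_prop : Continuous stdGaussPdf).measurable.comp
      (by fun_prop)).aestronglyMeasurable.mul
      ((hh.measurable_of_antitoneOn hmono).comp (measurable_id.div_const σ)).aestronglyMeasurable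
  · rw [Real.norm_eq_abs, abs_of_nonneg (mul_nonneg (stdGaussPdf_pos _).le (hnn _)),
      stdGaussPdf_mul_sub_comm]
    exact mul_le_mul_of_nonneg_left (hh.apply_le_apply_zero hmono _) (stdGaussPdf_pos _).le

lemma le_integral_stdGaussPdf_mul_comp_div (hh : h.Even) (hmono : AntitoneOn h (Ici 0))
    (hnn : ∀ x, 0 ≤ h x) (hs : 0 < s) (hσ : 0 < σ) (x : ℝ) :
    2 * stdGaussPdf 1 * h ((|x| + 1 / s) / σ) / s ≤
      ∫ θ, stdGaussPdf (s * (x - θ)) * h (θ / σ) := by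
  have hint := integrable_stdGaussPdf_mul_comp_div (σ := σ) hh hmono hnn hs.ne' x
  have hconst : ∀ θ ∈ Icc (x - 1 / s) (x + 1 / s),
      stdGaussPdf 1 * h ((|x| + 1 / s) / σ) ≤ stdGaussPdf (s * (x - θ)) * h (θ / σ) := by
    rintro θ ⟨hθl, hθr⟩
    have hxθ : |x - θ| ≤ 1 / s := abs_le.2 ⟨by linarith, by linarith⟩
    have hθ : |θ| ≤ |x| + 1 / s := by
      have := abs_sub_abs_le_abs_sub θ x
      rw [abs_sub_comm] at this
      linarith
    refine mul_le_mul (stdGaussPdf_one_le ?_) (hh.apply_le_of_abs_le hmono ?_) (hnn _)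
      (stdGaussPdf_pos _).le
    · rw [abs_mul, abs_of_pos hs]
      calc s * |x - θ| ≤ s * (1 / s) := by gcongr
        _ = 1 := by field_simp
    · rw [abs_div, abs_of_pos hσ]; gcongr
  calc 2 * stdGaussPdf 1 * h ((|x| + 1 / s) / σ) / s
      = volume.real (Icc (x - 1 / s) (x + 1 / s)) • (stdGaussPdf 1 * h ((|x| + 1 / s) / σ)) := by
        rw [Real.volume_real_Icc_of_le (by have := one_div_pos.2 hs; linarith), smul_eq_mul]
        ring
    _ ≤ ∫ θ in Icc (x - 1 / s) (x + 1 / s), stdGaussPdf (s * (x - θ)) * h (θ / σ) :=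
        setIntegral_ge_of_const_le measurableSet_Icc measure_Icc_lt_top.ne hconst hint.integrableOn
    _ ≤ ∫ θ, stdGaussPdf (s * (x - θ)) * h (θ / σ) :=
        setIntegral_le_integral hint (.of_forall fun θ => mul_nonneg (stdGaussPdf_pos _).le (hnn _))

lemma posteriorLaplace_nonneg (hnn : ∀ x, 0 ≤ h x) (t x : ℝ) : 0 ≤ posteriorLaplace h σ s t x :=
  div_nonneg (integral_nonneg fun θ => by
      have := stdGaussPdf_pos (s * (x - θ)); have := hnn (θ / σ); positivity)
    (integral_nonneg fun θ => mul_nonneg (stdGaussPdf_pos _).le (hnn _))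

lemma posteriorLaplace_le (hh : h.Even) (hmono : AntitoneOn h (Ici 0)) (hpos : ∀ x, 0 < h x)
    (hs : 0 < s) (hσ : 0 < σ) (t x : ℝ) :
    posteriorLaplace h σ s t x ≤
      exp (t ^ 2 / 2) * (h 0 / (2 * stdGaussPdf 1)) / h ((|x| + 1 / s) / σ) := by
  have hnn x := (hpos x).le
  have := stdGaussPdf_pos 1
  have := hpos ((|x| + 1 / s) / σ)
  calc posteriorLaplace h σ s t x
      ≤ (exp (t ^ 2 / 2) * h 0 / s) / (2 * stdGaussPdf 1 * h ((|x| + 1 / s) / σ) / s) :=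
        div_le_div₀ (by have := hpos 0; positivity)
          (integral_exp_mul_stdGaussPdf_mul_le hh hmono hnn hs t x) (by positivity)
          (le_integral_stdGaussPdf_mul_comp_div hh hmono hnn hs hσ x)
    _ = exp (t ^ 2 / 2) * (h 0 / (2 * stdGaussPdf 1)) / h ((|x| + 1 / s) / σ) := by
        field_simp

end Posterior

lemma Real.rpow_add_le_mul_rpow_add_rpow {a b : ℝ} (ha : 0 ≤ a) (hb : 0 ≤ b) {p : ℝ}
    (hp : 1 ≤ p) : (a + b) ^ p ≤ 2 ^ (p - 1) * (a ^ p + b ^ p) := by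
  have := NNReal.rpow_add_le_mul_rpow_add_rpow ⟨a, ha⟩ ⟨b, hb⟩ hp
  exact_mod_cast this

lemma Real.log_one_add_rpow_le {w r : ℝ} (hw : 0 ≤ w) (hr : 0 < r) :
    log (1 + w) ^ r ≤ r ^ r * (1 + w) := by
  have hw1 : 0 ≤ 1 + w := by linarith
  have hlog : log (1 + w) ≤ r * (1 + w) ^ r⁻¹ := by
    simpa [div_inv_eq_mul, mul_comm] using log_le_rpow_div hw1 (inv_pos.2 hr)
  calc log (1 + w) ^ r ≤ (r * (1 + w) ^ r⁻¹) ^ r :=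
        rpow_le_rpow (log_nonneg (by linarith)) hlog hr.le
    _ = r ^ r * (1 + w) := by
        rw [mul_rpow hr.le (by positivity), ← rpow_mul hw1, inv_mul_cancel₀ hr.ne', rpow_one]

lemma log_one_add_div_le {s σ : ℝ} (hs : 0 < s) (hσ : 0 < σ) (x θ₀ : ℝ) :
    log (1 + (|x| + 1 / s) / σ) ≤ log (1 + (|θ₀| + 1 / s) / σ) + log (1 + s * |x - θ₀|) := by
  have hx : |x| ≤ |θ₀| + |x - θ₀| := by linarith [abs_sub_abs_le_abs_sub x θ₀]
  have hsσ : 1 / s / σ ≤ (|θ₀| + 1 / s) / σ := by gcongr; linarith [abs_nonneg θ₀]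
  have hy : (|x| + 1 / s) / σ ≤ (|θ₀| + 1 / s) / σ + s * |x - θ₀| * ((|θ₀| + 1 / s) / σ) :=
    calc (|x| + 1 / s) / σ ≤ (|θ₀| + |x - θ₀| + 1 / s) / σ := by gcongr
      _ = (|θ₀| + 1 / s) / σ + s * |x - θ₀| * (1 / s / σ) := by field_simp; ring
      _ ≤ _ := by gcongr
  rw [← log_mul (by positivity) (by positivity)]
  exact log_le_log (by positivity) (by nlinarith [abs_nonneg (x - θ₀)])

lemma exists_mul_add_log_rpow_le {c κ : ℝ} (hc : 0 ≤ c) (hκ : 0 ≤ κ) :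
    ∃ K, 0 ≤ K ∧ ∀ a w : ℝ, 0 ≤ a → 0 ≤ w →
      c * (a + log (1 + w)) ^ (1 + κ) ≤ c * 2 ^ κ * a ^ (1 + κ) + K + w ^ 2 / 4 := by
  set d := c * 2 ^ κ * (1 + κ) ^ (1 + κ)
  have hd : 0 ≤ d := by positivity
  refine ⟨d + d ^ 2, by positivity, fun a w ha hw => ?_⟩
  have hlog : 0 ≤ log (1 + w) := log_nonneg (by linarith)
  calc c * (a + log (1 + w)) ^ (1 + κ)
      ≤ c * (2 ^ κ * (a ^ (1 + κ) + log (1 + w) ^ (1 + κ))) := by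
        gcongr
        simpa using Real.rpow_add_le_mul_rpow_add_rpow ha hlog (p := 1 + κ) (by linarith)
    _ ≤ c * (2 ^ κ * (a ^ (1 + κ) + (1 + κ) ^ (1 + κ) * (1 + w))) := by
        gcongr; exact Real.log_one_add_rpow_le hw (by linarith)
    _ = c * 2 ^ κ * a ^ (1 + κ) + d * (1 + w) := by ring
    _ ≤ c * 2 ^ κ * a ^ (1 + κ) + (d + d ^ 2) + w ^ 2 / 4 := by nlinarith [sq_nonneg (w / 2 - d)]

lemma exists_one_div_le_exp_of_log_tail {h : ℝ → ℝ} {c₁ κ : ℝ} (hc₁ : 0 ≤ c₁) (hκ : 0 ≤ κ)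
    (hpos : ∀ x, 0 < h x)
    (htail : ∀ x : ℝ, 0 ≤ x → log (1 / h x) ≤ c₁ * (1 + log (1 + x) ^ (1 + κ))) :
    ∃ K, 0 ≤ K ∧ ∀ s σ x θ₀ : ℝ, 0 < s → 0 < σ →
      1 / h ((|x| + 1 / s) / σ) ≤ exp (c₁ + c₁ * 2 ^ κ * log (1 + (|θ₀| + 1 / s) / σ) ^ (1 + κ) +
        K + (s * (x - θ₀)) ^ 2 / 4) := by
  obtain ⟨K, hK0, hK⟩ := exists_mul_add_log_rpow_le hc₁ hκ
  refine ⟨K, hK0, fun s σ x θ₀ hs hσ => ?_⟩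
  have hy : 0 ≤ (|x| + 1 / s) / σ := by positivity
  have hexp : c₁ * log (1 + (|x| + 1 / s) / σ) ^ (1 + κ) ≤
      c₁ * 2 ^ κ * log (1 + (|θ₀| + 1 / s) / σ) ^ (1 + κ) + K + (s * (x - θ₀)) ^ 2 / 4 := by
    calc c₁ * log (1 + (|x| + 1 / s) / σ) ^ (1 + κ)
        ≤ c₁ * (log (1 + (|θ₀| + 1 / s) / σ) + log (1 + s * |x - θ₀|)) ^ (1 + κ) := by
          gcongr
          · exact log_nonneg (by linarith)
          · exact log_one_add_div_le hs hσ x θ₀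
      _ ≤ c₁ * 2 ^ κ * log (1 + (|θ₀| + 1 / s) / σ) ^ (1 + κ) + K + (s * |x - θ₀|) ^ 2 / 4 :=
          hK _ _ (log_nonneg (by linarith [show 0 ≤ (|θ₀| + 1 / s) / σ by positivity]))
            (by positivity)
      _ = _ := by rw [mul_pow, sq_abs, mul_pow]
  rw [← exp_log (one_div_pos.2 (hpos _))]
  exact exp_le_exp.2 ((htail _ hy).trans (by linarith))

lemma Real.log_le_of_le_exp {x y : ℝ} (hx : 0 ≤ x) (hy : 0 ≤ y) (hxy : x ≤ exp y) : log x ≤ y := by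
  rcases hx.eq_or_lt with rfl | hx
  · rwa [log_zero]
  · exact (log_le_iff_le_exp hx).2 hxy

theorem posterior_laplace_transform_bound_general
    (h : ℝ → ℝ) (c₁ κ : ℝ) (hc₁ : 0 < c₁) (hκ : 0 ≤ κ)
    (hsymm : ∀ x, h (-x) = h x) (hpos : ∀ x, 0 < h x)
    (hmono : AntitoneOn h (Set.Ici 0))
    (htail : ∀ x : ℝ, 0 ≤ x → Real.log (1 / h x) ≤ c₁ * (1 + Real.log (1 + x) ^ (1 + κ))) :
    ∃ C C₁ : ℝ, 0 < C ∧ 0 < C₁ ∧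
      ∀ (t θ₀ σ : ℝ) (_ : 0 < σ) (n : ℕ) (_ : 1 ≤ n),
        Real.log (∫ x : ℝ,
            (Real.sqrt n * stdGaussPdf (Real.sqrt n * (x - θ₀))) *
              ((∫ θ : ℝ, Real.exp (t * Real.sqrt n * (θ - x)) *
                  stdGaussPdf (Real.sqrt n * (x - θ)) * h (θ / σ)) /
                (∫ θ : ℝ, stdGaussPdf (Real.sqrt n * (x - θ)) * h (θ / σ)))) ≤
          t ^ 2 / 2 +
            C * Real.log (1 + (|θ₀| + 1 / Real.sqrt n) / σ) ^ (1 + κ) + C₁ := by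
  obtain ⟨K, hK0, hK⟩ := exists_one_div_le_exp_of_log_tail hc₁.le hκ hpos htail
  set A := h 0 / (2 * stdGaussPdf 1)
  have hA : 0 < A := div_pos (hpos 0) (mul_pos two_pos (stdGaussPdf_pos 1))
  refine ⟨c₁ * 2 ^ κ, |log (√2 * A)| + c₁ + K, by positivity, by positivity,
    fun t θ₀ σ hσ n hn => ?_⟩
  have hs : 0 < √(n : ℝ) := sqrt_pos.2 (by exact_mod_cast hn)
  set L := log (1 + (|θ₀| + 1 / √(n : ℝ)) / σ) ^ (1 + κ)
  have hL : 0 ≤ L := rpow_nonneg (log_nonneg (by simp only [le_add_iff_nonneg_right]; positivity)) _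
  set D := exp (t ^ 2 / 2) * A * exp (c₁ + c₁ * 2 ^ κ * L + K)
  have hR x : posteriorLaplace h σ √n t x ≤ D * exp ((√n * (x - θ₀)) ^ 2 / 4) :=
    calc posteriorLaplace h σ √n t x ≤ exp (t ^ 2 / 2) * A * (1 / h ((|x| + 1 / √n) / σ)) := by
          simpa only [mul_one_div] using posteriorLaplace_le hsymm hmono hpos hs hσ t x
      _ ≤ exp (t ^ 2 / 2) * A * exp (c₁ + c₁ * 2 ^ κ * L + K + (√n * (x - θ₀)) ^ 2 / 4) := by
          gcongr; exact hK _ _ x θ₀ hs hσ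
      _ = D * exp ((√n * (x - θ₀)) ^ 2 / 4) := by rw [exp_add _ ((√n * (x - θ₀)) ^ 2 / 4)]; ring
  show log (∫ x, √n * stdGaussPdf (√n * (x - θ₀)) * posteriorLaplace h σ √n t x) ≤ _
  have hnn x := (hpos x).le
  refine Real.log_le_of_le_exp (integral_nonneg fun x => ?_) (by positivity)
    ((integral_mul_stdGaussPdf_le hs (posteriorLaplace_nonneg hnn t) hR).trans ?_)
  · have := stdGaussPdf_pos (√n * (x - θ₀))
    have := posteriorLaplace_nonneg (σ := σ) (s := √n) hnn t x
    positivity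
  calc √2 * D = exp (log (√2 * A)) * exp (t ^ 2 / 2 + c₁ + c₁ * 2 ^ κ * L + K) := by
        rw [exp_log (by positivity)]; simp only [D, exp_add]; ring
    _ ≤ exp |log (√2 * A)| * exp (t ^ 2 / 2 + c₁ + c₁ * 2 ^ κ * L + K) := by
        gcongr; exact le_abs_self _
    _ = exp (t ^ 2 / 2 + c₁ * 2 ^ κ * L + (|log (√2 * A)| + c₁ + K)) := by
        rw [← exp_add]; ring_nf

/-- Laplace transform bound for the posterior in the normal model `X | θ ~ N(θ, 1/n)` with
heavy-tailed scale prior `θ = σζ`, `ζ` with density `h`: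
`log E_{θ₀} E^π[exp(t√n(θ−X)) | X] ≤ t²/2 + C log^{1+κ}(1 + (|θ₀|+1/√n)/σ) + C₁`. -/
theorem posterior_laplace_transform_bound
    (h : ℝ → ℝ) (c₁ κ : ℝ) (hc₁ : 0 < c₁) (hκ : 0 ≤ κ)
    (hsymm : ∀ x, h (-x) = h x) (hpos : ∀ x, 0 < h x)
    (hbdd : ∃ M, ∀ x, h x ≤ M) (hmono : AntitoneOn h (Set.Ici 0))
    (hmeas : Measurable h)
    (htail : ∀ x : ℝ, 0 ≤ x → Real.log (1 / h x) ≤ c₁ * (1 + Real.log (1 + x) ^ (1 + κ))) :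
    ∃ C C₁ : ℝ, 0 < C ∧ 0 < C₁ ∧
      ∀ (t θ₀ σ : ℝ) (_ : 0 < σ) (n : ℕ) (_ : 1 ≤ n),
        Real.log (∫ x : ℝ,
            (Real.sqrt n * stdGaussPdf (Real.sqrt n * (x - θ₀))) *
              ((∫ θ : ℝ, Real.exp (t * Real.sqrt n * (θ - x)) *
                  stdGaussPdf (Real.sqrt n * (x - θ)) * h (θ / σ)) /
                (∫ θ : ℝ, stdGaussPdf (Real.sqrt n * (x - θ)) * h (θ / σ)))) ≤
          t ^ 2 / 2 +
            C * Real.log (1 + (|θ₀| + 1 / Real.sqrt n) / σ) ^ (1 + κ) + C₁ :=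
  posterior_laplace_transform_bound_general h c₁ κ hc₁ hκ hsymm hpos hmono htail
end

section
/- Let X_k ~ N(f_{0,k}, 1/n) independently for k ≥ 1, and let N ⊂ ℕ be a set of indices such that |f_{0,k}| ≤ 1/√n for all k ∉ N. Define events A_{k,j} = {|X_k| ≤ √(4 log(n (j² ∨ 1))/n)}, and A_n = ∩_{K_n < k ≤ n, k ∉ N} A_{k,0} ∩ ∩_{j≥1} ∩_{jn < k ≤ (j+1)n, k ∉ N} A_{k,j}. Then for large enough n, P(A_n^c) ≤ C/√n for a universal constant C. -/
/-!
Off `N n`, `X n k` is Gaussian with variance `1/n` and mean at most `1/√n`, so the sub-Gaussian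
Chernoff bound shows that it exceeds `√(4 log M / n)` with probability at most
`2 exp (-(2 √(log M) - 1)² / 2) ≤ 2 M^(-3/2)` as soon as `log M ≥ 16`. A union bound over the at
most `n` indices of `(K n, n]` (with `M = n`) and over the `n` indices of each block
`(j n, (j + 1) n]` (with `M = n j²`) gives `2/√n + (2/√n) ∑_{j ≥ 1} j⁻³`.
-/

open Real MeasureTheory ProbabilityTheory
open scoped NNReal ENNReal

lemma hasSubgaussianMGF_sub_gaussianReal (m : ℝ) (v : ℝ≥0) :
    HasSubgaussianMGF (fun x ↦ x - m) v (gaussianReal m v) := by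
  have hcentered : HasSubgaussianMGF id v (gaussianReal 0 v) :=
    ⟨integrable_exp_mul_gaussianReal, fun t ↦ by simp [mgf_id_gaussianReal]⟩
  rw [← sub_self m, ← gaussianReal_map_sub_const] at hcentered
  exact (HasSubgaussianMGF.id_map_iff (by fun_prop)).1 hcentered

lemma gaussianReal_le_abs_sub_le (m : ℝ) (v : ℝ≥0) {ε : ℝ} (hε : 0 ≤ ε) :
    gaussianReal m v {x | ε ≤ |x - m|} ≤ ENNReal.ofReal (2 * exp (-ε ^ 2 / (2 * v))) := by
  have h := hasSubgaussianMGF_sub_gaussianReal m v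
  have hsplit : {x | ε ≤ |x - m|} ⊆ {x | ε ≤ x - m} ∪ {x | ε ≤ (-fun x ↦ x - m) x} := by
    intro x hx
    rcases le_abs'.1 (show ε ≤ |x - m| from hx) with hx | hx
    · exact Or.inr (show ε ≤ -(x - m) by linarith)
    · exact Or.inl hx
  rw [← ofReal_measureReal]
  refine ENNReal.ofReal_le_ofReal ?_
  calc (gaussianReal m v).real {x | ε ≤ |x - m|}
      ≤ (gaussianReal m v).real {x | ε ≤ x - m}
        + (gaussianReal m v).real {x | ε ≤ (-fun x ↦ x - m) x} :=
        (measureReal_mono hsplit).trans (measureReal_union_le _ _)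
    _ ≤ 2 * exp (-ε ^ 2 / (2 * v)) := by
        linarith [h.measure_ge_le hε, h.neg.measure_ge_le hε]

lemma exp_neg_sq_two_sqrt_log_sub_one_div_two_le {M : ℝ} (hM : exp 16 ≤ M) :
    exp (-(2 * √(log M) - 1) ^ 2 / 2) ≤ 1 / (M * √M) := by
  obtain ⟨L, rfl⟩ : ∃ L, M = exp L := ⟨log M, (exp_log ((exp_pos 16).trans_le hM)).symm⟩
  have hL : 16 ≤ L := exp_le_exp.1 hM
  have hs : 4 ≤ √L := (le_sqrt (by norm_num) (by linarith)).2 (by linarith)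
  have hsq := sq_sqrt (show 0 ≤ L by linarith)
  rw [log_exp, ← exp_half, ← exp_add, one_div, ← exp_neg, exp_le_exp]
  nlinarith

lemma measure_sqrt_four_log_div_lt_abs_le {Ω : Type*} [MeasurableSpace Ω] {μ : Measure Ω}
    {X : Ω → ℝ} {m M : ℝ} {n : ℕ} (hX : Measurable X)
    (hlaw : μ.map X = gaussianReal m (1 / n)) (hn : 0 < n) (hm : |m| ≤ 1 / √n)
    (hM : exp 16 ≤ M) :
    μ {ω | √(4 * log M / n) < |X ω|} ≤ ENNReal.ofReal (2 / (M * √M)) := by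
  have hL : 16 ≤ log M := (le_log_iff_exp_le ((exp_pos 16).trans_le hM)).2 hM
  have hsqL : 4 ≤ √(log M) := (le_sqrt (by norm_num) (by linarith)).2 (by linarith)
  have hsqn : 0 < √(n : ℝ) := sqrt_pos.2 (Nat.cast_pos.2 hn)
  set ε := (2 * √(log M) - 1) / √n with hε_def
  have hε : 0 ≤ ε := div_nonneg (by linarith) hsqn.le
  have hthreshold : √(4 * log M / n) = ε + 1 / √n := by
    rw [sqrt_div (by linarith), sqrt_mul (by norm_num), show (4 : ℝ) = 2 ^ 2 by norm_num,
      sqrt_sq (by norm_num), hε_def]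
    ring
  have hsub : {ω | √(4 * log M / n) < |X ω|} ⊆ X ⁻¹' {x | ε ≤ |x - m|} := by
    intro ω hω
    have hω : √(4 * log M / n) < |X ω| := hω
    show ε ≤ |X ω - m|
    linarith [abs_sub_abs_le_abs_sub (X ω) m]
  have hexponent : ε ^ 2 / (2 * ((1 / n : ℝ≥0) : ℝ)) = (2 * √(log M) - 1) ^ 2 / 2 := by
    rw [hε_def, div_pow, sq_sqrt (Nat.cast_nonneg n)]
    push_cast
    field_simp
  calc μ {ω | √(4 * log M / n) < |X ω|} ≤ μ (X ⁻¹' {x | ε ≤ |x - m|}) := measure_mono hsub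
    _ = gaussianReal m (1 / n) {x | ε ≤ |x - m|} := by
        rw [← hlaw, Measure.map_apply hX (measurableSet_le measurable_const (by fun_prop))]
    _ ≤ ENNReal.ofReal (2 * exp (-ε ^ 2 / (2 * ((1 / n : ℝ≥0) : ℝ)))) :=
        gaussianReal_le_abs_sub_le m _ hε
    _ ≤ ENNReal.ofReal (2 / (M * √M)) := by
        refine ENNReal.ofReal_le_ofReal ?_
        rw [neg_div, hexponent, ← neg_div, ← mul_one_div 2]
        gcongr
        exact exp_neg_sq_two_sqrt_log_sub_one_div_two_le hM

lemma measure_biUnion_le_of_card_le {Ω ι : Type*} [MeasurableSpace Ω] (μ : Measure Ω)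
    (s : Finset ι) (E : ι → Set Ω) {n : ℕ} (hs : s.card ≤ n) {b : ℝ}
    (hb : ∀ i ∈ s, μ (E i) ≤ ENNReal.ofReal b) :
    μ (⋃ i ∈ s, E i) ≤ ENNReal.ofReal (n * b) :=
  calc μ (⋃ i ∈ s, E i) ≤ ∑ i ∈ s, μ (E i) := measure_biUnion_finset_le s E
    _ ≤ s.card • ENNReal.ofReal b := Finset.sum_le_card_nsmul _ _ _ hb
    _ ≤ n • ENNReal.ofReal b := nsmul_le_nsmul_left zero_le hs
    _ = ENNReal.ofReal (n * b) := by
        rw [ENNReal.ofReal_mul (Nat.cast_nonneg n), ENNReal.ofReal_natCast, nsmul_eq_mul]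

lemma ofReal_add_tsum_blocks_eq {x S : ℝ} (hx : 0 < x)
    (hS : HasSum (fun j : ℕ ↦ 1 / ((j + 1 : ℕ) : ℝ) ^ 3) S) :
    ENNReal.ofReal (x * (2 / (x * √x))) + ∑' j : ℕ,
        ENNReal.ofReal (x * (2 / (x * ((j + 1 : ℕ) : ℝ) ^ 2 * √(x * ((j + 1 : ℕ) : ℝ) ^ 2)))) =
      ENNReal.ofReal ((2 + 2 * S) / √x) := by
  have hsqx : 0 < √x := sqrt_pos.2 hx
  have hS0 : 0 ≤ S := hS.nonneg fun j ↦ by positivity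
  have hhead : x * (2 / (x * √x)) = 2 / √x := by
    field_simp
  have hblock (j : ℕ) : x * (2 / (x * ((j + 1 : ℕ) : ℝ) ^ 2 * √(x * ((j + 1 : ℕ) : ℝ) ^ 2))) =
      2 / √x * (1 / ((j + 1 : ℕ) : ℝ) ^ 3) := by
    rw [sqrt_mul hx.le, sqrt_sq (Nat.cast_nonneg _)]
    field_simp
  simp_rw [hhead, hblock]
  rw [← ENNReal.ofReal_tsum_of_nonneg (fun j ↦ by positivity) (hS.summable.mul_left _),
    tsum_mul_left, hS.tsum_eq, ← ENNReal.ofReal_add (by positivity) (by positivity)]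
  congr 1
  ring

theorem event_An_complement_prob_general
    {Ω : Type*} [MeasurableSpace Ω] (μ : Measure Ω)
    (f₀ : ℕ → ℝ) (N : ℕ → Set ℕ) (K : ℕ → ℕ)
    (X : ℕ → ℕ → Ω → ℝ) (hXmeas : ∀ n k, Measurable (X n k))
    (hlaw : ∀ n k, 1 ≤ n → Measure.map (X n k) μ = gaussianReal (f₀ k) (1 / n))
    (hsmall : ∀ n k, 1 ≤ n → k ∉ N n → |f₀ k| ≤ 1 / Real.sqrt n) :
    ∃ C : ℝ, 0 < C ∧ ∃ n₀ : ℕ, ∀ n : ℕ, n₀ ≤ n →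
      μ ({ω : Ω |
          (∀ k : ℕ, K n < k → k ≤ n → k ∉ N n →
            |X n k ω| ≤ Real.sqrt (4 * Real.log n / n)) ∧
          (∀ j : ℕ, 1 ≤ j → ∀ k : ℕ, j * n < k → k ≤ (j + 1) * n → k ∉ N n →
            |X n k ω| ≤ Real.sqrt (4 * Real.log (n * j ^ 2) / n))}ᶜ) ≤
        ENNReal.ofReal (C / Real.sqrt n) := by
  obtain ⟨S, hS⟩ : ∃ S, HasSum (fun j : ℕ ↦ 1 / ((j + 1 : ℕ) : ℝ) ^ 3) S :=
    ⟨_, ((summable_nat_add_iff 1).2 (summable_one_div_nat_pow (p := 3).2 (by norm_num))).hasSum⟩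
  have hS0 : 0 ≤ S := hS.nonneg fun j ↦ by positivity
  refine ⟨2 + 2 * S, by positivity, ⌈exp 16⌉₊, fun n hn ↦ ?_⟩
  have hn16 : exp 16 ≤ n := Nat.ceil_le.1 hn
  have hn0 : 0 < n := Nat.cast_pos.1 ((exp_pos 16).trans_le hn16)
  set bad : ℕ → ℝ → Set Ω := fun k M ↦ {ω | k ∉ N n ∧ √(4 * log M / n) < |X n k ω|}
  have hbad : ∀ k M, exp 16 ≤ M → μ (bad k M) ≤ ENNReal.ofReal (2 / (M * √M)) := by
    intro k M hM
    by_cases hk : k ∈ N n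
    · simp [bad, hk]
    · exact (measure_mono fun ω hω ↦ hω.2).trans <| measure_sqrt_four_log_div_lt_abs_le
        (hXmeas n k) (hlaw n k hn0) hn0 (hsmall n k hn0 hk) hM
  -- Blocks are indexed by `j + 1`: for `j = 0` the threshold would involve `log (n * 0 ^ 2) = 0`.
  calc _ ≤ μ ((⋃ k ∈ Finset.Ioc (K n) n, bad k n) ∪ ⋃ j : ℕ,
        ⋃ k ∈ Finset.Ioc ((j + 1) * n) ((j + 1 + 1) * n), bad k (n * ((j + 1 : ℕ) : ℝ) ^ 2)) :=
        measure_mono ?cover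
    _ ≤ μ (⋃ k ∈ Finset.Ioc (K n) n, bad k n) + ∑' j : ℕ,
        μ (⋃ k ∈ Finset.Ioc ((j + 1) * n) ((j + 1 + 1) * n), bad k (n * ((j + 1 : ℕ) : ℝ) ^ 2)) :=
        (measure_union_le _ _).trans (by gcongr; exact measure_iUnion_le _)
    _ ≤ ENNReal.ofReal (n * (2 / (n * √n))) + ∑' j : ℕ,
        ENNReal.ofReal (n * (2 / (n * ((j + 1 : ℕ) : ℝ) ^ 2 * √(n * ((j + 1 : ℕ) : ℝ) ^ 2)))) := by
      have hMj : ∀ j : ℕ, exp 16 ≤ n * ((j + 1 : ℕ) : ℝ) ^ 2 := fun j ↦ hn16.trans <|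
        le_mul_of_one_le_right (Nat.cast_nonneg n) (one_le_pow₀ (Nat.one_le_cast.2 j.succ_pos))
      refine add_le_add (measure_biUnion_le_of_card_le μ _ _ ?_ fun k _ ↦ hbad k n hn16)
        (ENNReal.tsum_le_tsum fun j ↦ measure_biUnion_le_of_card_le μ _ _ ?_
          fun k _ ↦ hbad k _ (hMj j))
      · simp
      · rw [Nat.card_Ioc, add_mul (j + 1), one_mul, Nat.add_sub_cancel_left]
    _ = ENNReal.ofReal ((2 + 2 * S) / √n) :=
      ofReal_add_tsum_blocks_eq (Nat.cast_pos.2 hn0) hS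
  case cover =>
    intro ω hω
    simp only [Set.mem_compl_iff, Set.mem_ofPred_eq, not_and_or] at hω
    push Not at hω
    rcases hω with ⟨k, hKk, hkn, hkN, hk⟩ | ⟨j, hj, k, hjk, hkj, hkN, hk⟩
    · exact Or.inl (Set.mem_biUnion (Finset.mem_Ioc.2 ⟨hKk, hkn⟩) ⟨hkN, hk⟩)
    · obtain ⟨i, rfl⟩ := Nat.exists_eq_add_of_le' hj
      exact Or.inr (Set.mem_iUnion.2 ⟨i, Set.mem_biUnion (Finset.mem_Ioc.2 ⟨hjk, hkj⟩) ⟨hkN, hk⟩⟩)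

/-- In the Gaussian sequence model `X_k ~ N(f₀_k, 1/n)` with `|f₀_k| ≤ 1/√n` off a set
`N` of indices, the event `A_n` (all thresholded observations small blockwise) has
complement probability at most `C/√n` for large `n`. -/
theorem event_An_complement_prob
    {Ω : Type*} [MeasurableSpace Ω] (μ : Measure Ω) [IsProbabilityMeasure μ]
    (f₀ : ℕ → ℝ) (N : ℕ → Set ℕ) (K : ℕ → ℕ) (hK : ∀ n, K n ≤ n)
    (X : ℕ → ℕ → Ω → ℝ) (hXmeas : ∀ n k, Measurable (X n k))
    (hindep : ∀ n, iIndepFun (X n) μ)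
    (hlaw : ∀ n k, 1 ≤ n → Measure.map (X n k) μ = gaussianReal (f₀ k) (1 / n))
    (hsmall : ∀ n k, 1 ≤ n → k ∉ N n → |f₀ k| ≤ 1 / Real.sqrt n) :
    ∃ C : ℝ, 0 < C ∧ ∃ n₀ : ℕ, ∀ n : ℕ, n₀ ≤ n →
      μ ({ω : Ω |
          (∀ k : ℕ, K n < k → k ≤ n → k ∉ N n →
            |X n k ω| ≤ Real.sqrt (4 * Real.log n / n)) ∧
          (∀ j : ℕ, 1 ≤ j → ∀ k : ℕ, j * n < k → k ≤ (j + 1) * n → k ∉ N n →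
            |X n k ω| ≤ Real.sqrt (4 * Real.log (n * j ^ 2) / n))}ᶜ) ≤
        ENNReal.ofReal (C / Real.sqrt n) :=
  event_An_complement_prob_general μ f₀ N K X hXmeas hlaw hsmall
end

section
/- Let H be a probability distribution on ℝ with density h symmetric, positive, bounded and decreasing on [0,∞), with tail H̄(x) = ∫_x^∞ h(u)du ≤ c_2/x² for x ≥ 1. Fix a > 0, δ > 0 and σ_k = exp(−a (log k)^{1+δ}) for k ≥ 2. Then for any D > 0 there exist constants C, K_0 such that for all K ≥ K_0 and all ε ≥ D K^{-β} (β > 0 fixed): ∏_{k > K} (1 − 2 H̄(ε / (D σ_k √k log k))) ≥ exp(−C e^{−a (log K)^{1+δ}}); in particular this product is bounded below by a positive constant independent of K. -/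
/-!
Because `σ_k = exp (-a (log k)^(1+δ))` decays faster than every power of `k`, for large `k`
the threshold `x_k = ε / (D σ_k √k log k)` satisfies `x_k² ≥ k² / σ_k` as soon as
`ε ≥ D K^(-β)`, so the tail bound gives `2 H̄(x_k) ≤ 2 c₂ σ_K / k²`. Since
`1 - t ≥ exp (-2t)` for `t ≤ 1/2`, the product is at least `exp (-4 c₂ σ_K ζ(2))`.
-/

open Real

open Filter in
theorem eventually_mul_log_le_mul_log_rpow {a δ : ℝ} (ha : 0 < a) (hδ : 0 < δ) (N : ℝ) :
    ∀ᶠ x : ℝ in atTop, N * log x ≤ a * log x ^ (1 + δ) := by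
  have hpow : ∀ᶠ L : ℝ in atTop, N ≤ a * L ^ δ :=
    ((tendsto_rpow_atTop hδ).const_mul_atTop ha).eventually_ge_atTop N
  refine tendsto_log_atTop.eventually (p := fun L => N * L ≤ a * L ^ (1 + δ)) ?_
  filter_upwards [hpow, eventually_gt_atTop 0] with L hL hL0
  rw [rpow_add hL0, rpow_one]
  nlinarith

theorem exp_neg_mul_log_rpow_le_of_le {a p K k : ℝ} (ha : 0 ≤ a) (hp : 0 ≤ p) (hK : 1 ≤ K)
    (hKk : K ≤ k) : exp (-a * log k ^ p) ≤ exp (-a * log K ^ p) := by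
  have hlog : log K ^ p ≤ log k ^ p :=
    rpow_le_rpow (log_nonneg hK) (log_le_log (by linarith) hKk) hp
  exact exp_le_exp.mpr (by nlinarith)

theorem exp_neg_two_mul_le_one_sub {t : ℝ} (ht0 : 0 ≤ t) (ht : t ≤ 1 / 2) :
    exp (-(2 * t)) ≤ 1 - t := by
  rw [exp_neg, inv_le_iff_one_le_mul₀ (exp_pos _)]
  calc 1 ≤ (1 - t) * (2 * t + 1) := by nlinarith
    _ ≤ (1 - t) * exp (2 * t) := by
      gcongr
      · linarith
      · exact add_one_le_exp _

theorem exp_neg_two_mul_tsum_le_tprod_one_sub {ι : Type*} {u b : ι → ℝ} (hb : Summable b)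
    (hu0 : ∀ i, 0 ≤ u i) (hub : ∀ i, u i ≤ b i) (hu1 : ∀ i, u i ≤ 1 / 2) :
    exp (-(2 * ∑' i, b i)) ≤ ∏' i, (1 - u i) := by
  have hpos : ∀ i, 0 < 1 - u i := fun i => by linarith [hu1 i]
  have hlog_ge : ∀ i, -(2 * b i) ≤ log (1 - u i) := fun i => by
    rw [le_log_iff_exp_le (hpos i)]
    exact (exp_le_exp.mpr (by linarith [hub i])).trans
      (exp_neg_two_mul_le_one_sub (hu0 i) (hu1 i))
  have hlog_le : ∀ i, log (1 - u i) ≤ 0 := fun i =>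
    log_nonpos (hpos i).le (by linarith [hu0 i])
  have hsum : Summable fun i => log (1 - u i) :=
    (hb.mul_left 2).of_norm_bounded fun i => by
      rw [norm_of_nonpos (hlog_le i)]; linarith [hlog_ge i]
  rw [← rexp_tsum_eq_tprod hpos hsum, ← tsum_mul_left, ← tsum_neg]
  exact exp_le_exp.mpr ((hb.mul_left 2).neg.tsum_le_tsum hlog_ge hsum)

theorem sq_mul_exp_le_sq_div {β D ε s k : ℝ} (hk : 1 < k) (hD : 0 < D)
    (hε : D * k ^ (-β) ≤ ε) (hs : (2 * β + 6) * log k ≤ s) :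
    k ^ 2 * exp s ≤ (ε / (D * exp (-s) * √k * log k)) ^ 2 := by
  -- `√k log k ≤ k²` gives `x ≥ k^(-(β+2)) e^s`; squaring, `e^s ≥ k^(2β+6)` leaves `k² e^s`.
  set L := log k
  have hL : 0 < L := log_pos hk
  have hkL : exp L = k := exp_log (by linarith)
  have hden : D * exp (-s) * √k * L ≤ D * exp (2 * L - s) := by
    have : √k * L ≤ k * k :=
      mul_le_mul (sqrt_le_self_iff.mpr (Or.inr hk.le)) ((log_le_sub_one_of_pos (by linarith)).trans
        (by linarith)) hL.le (by linarith)
    calc D * exp (-s) * √k * L = D * exp (-s) * (√k * L) := by ring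
      _ ≤ D * exp (-s) * (k * k) := by gcongr
      _ = D * exp (2 * L - s) := by
        rw [← hkL, show 2 * L - s = -s + L + L by ring, exp_add, exp_add]; ring
  have hy : exp (s - (β + 2) * L) ≤ ε / (D * exp (-s) * √k * L) := by
    rw [le_div_iff₀ (by have := sqrt_pos.mpr (by linarith : (0:ℝ) < k); positivity)]
    calc exp (s - (β + 2) * L) * (D * exp (-s) * √k * L)
        ≤ exp (s - (β + 2) * L) * (D * exp (2 * L - s)) := by gcongr
      _ = D * k ^ (-β) := by
        rw [rpow_def_of_pos (by linarith), mul_left_comm, ← exp_add]; ring_nf; rfl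
      _ ≤ ε := hε
  calc k ^ 2 * exp s = exp (2 * L + s) := by rw [exp_add, ← hkL, ← exp_nat_mul]; norm_num
    _ ≤ exp (s - (β + 2) * L) ^ 2 := by rw [← exp_nat_mul]; gcongr; push_cast; linarith
    _ ≤ _ := by gcongr

open MeasureTheory Set in
theorem tail_le_of_decay {h : ℝ → ℝ} {c₂ a p β D ε K k : ℝ}
    (htail : ∀ x : ℝ, 1 ≤ x → (∫ u in Ioi x, h u) ≤ c₂ / x ^ 2) (hc₂ : 0 ≤ c₂) (ha : 0 ≤ a)
    (hp : 0 ≤ p) (hβ : 0 ≤ β) (hK : 1 ≤ K) (hKk : K < k) (hD : 0 < D) (hε : D * K ^ (-β) ≤ ε)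
    (hdecay : (2 * β + 6) * log k ≤ a * log k ^ p) :
    (∫ u in Ioi (ε / (D * exp (-a * log k ^ p) * √k * log k)), h u) ≤
      c₂ * exp (-a * log K ^ p) * (k ^ 2)⁻¹ := by
  have hk : 1 < k := hK.trans_lt hKk
  have hεk : D * k ^ (-β) ≤ ε := le_trans (mul_le_mul_of_nonneg_left
    (rpow_le_rpow_of_nonpos (by linarith) hKk.le (by linarith)) hD.le) hε
  have hε0 : 0 < ε := by
    have := rpow_pos_of_pos (by linarith : (0:ℝ) < k) (-β)
    exact lt_of_lt_of_le (by positivity) hεk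
  set s := a * log k ^ p
  set x := ε / (D * exp (-a * log k ^ p) * √k * log k)
  have hx : k ^ 2 * exp s ≤ x ^ 2 := by
    simpa only [x, neg_mul] using sq_mul_exp_le_sq_div hk hD hεk hdecay
  have hks : 1 ≤ k ^ 2 * exp s :=
    one_le_mul_of_one_le_of_one_le (one_le_pow₀ hk.le)
      (one_le_exp (mul_nonneg ha (rpow_nonneg (log_nonneg hk.le) _)))
  have hx1 : 1 ≤ x := by
    have : 0 < log k := log_pos hk
    have : 0 < √k := sqrt_pos.mpr (by linarith)
    have : 0 ≤ x := by positivity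
    nlinarith
  calc (∫ u in Ioi x, h u) ≤ c₂ / x ^ 2 := htail x hx1
    _ ≤ c₂ / (k ^ 2 * exp s) := by gcongr
    _ = c₂ * exp (-a * log k ^ p) * (k ^ 2)⁻¹ := by rw [neg_mul, exp_neg]; field_simp; rfl
    _ ≤ c₂ * exp (-a * log K ^ p) * (k ^ 2)⁻¹ := by
      gcongr c₂ * ?_ * _; exact exp_neg_mul_log_rpow_le_of_le ha hp hK hKk.le

theorem exp_neg_le_tprod_ite_one_sub {K : ℕ} {v : ℕ → ℝ} {c : ℝ} (hc : 0 ≤ c)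
    (hv0 : ∀ k, K < k → 0 ≤ v k) (hv : ∀ k : ℕ, K < k → v k ≤ c / (k : ℝ) ^ 2)
    (hv1 : ∀ k, K < k → v k ≤ 1 / 2) :
    exp (-(π ^ 2 / 3 * c)) ≤ ∏' k : ℕ, if K < k then 1 - v k else 1 := by
  have hzeta := hasSum_zeta_two.mul_left c
  convert exp_neg_two_mul_tsum_le_tprod_one_sub (u := fun k => if K < k then v k else 0)
    hzeta.summable (fun k => ?_) (fun k => ?_) (fun k => ?_) using 2
  · rw [hzeta.tsum_eq]; ring
  · funext k; split_ifs <;> ring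
  all_goals split_ifs with hk
  · exact hv0 k hk
  · exact le_rfl
  · rw [mul_one_div]; exact hv k hk
  · positivity
  · exact hv1 k hk
  · norm_num

open Filter in
theorem OT_highfreq_prior_mass_general
    (h : ℝ → ℝ) (c₂ a δ β : ℝ) (hc₂ : 0 < c₂) (ha : 0 < a) (hδ : 0 < δ) (hβ : 0 < β)
    (hpos : ∀ x, 0 < h x)
    (htail : ∀ x : ℝ, 1 ≤ x → (∫ u in Set.Ioi x, h u) ≤ c₂ / x ^ 2) :
    ∀ D : ℝ, 0 < D → ∃ C : ℝ, 0 < C ∧ ∃ c : ℝ, 0 < c ∧ ∃ K₀ : ℕ, 2 ≤ K₀ ∧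
      ∀ K : ℕ, K₀ ≤ K → ∀ ε : ℝ, D * (K : ℝ) ^ (-β) ≤ ε →
        (∏' k : ℕ, (if K < k then
            1 - 2 * (∫ u in Set.Ioi (ε / (D * Real.exp (-a * Real.log k ^ (1 + δ)) *
              Real.sqrt k * Real.log k)), h u)
          else 1)) ≥ Real.exp (-C * Real.exp (-a * Real.log K ^ (1 + δ))) ∧
        (∏' k : ℕ, (if K < k then
            1 - 2 * (∫ u in Set.Ioi (ε / (D * Real.exp (-a * Real.log k ^ (1 + δ)) *
              Real.sqrt k * Real.log k)), h u)
          else 1)) ≥ c := by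
  intro D hD
  obtain ⟨K₀, hK₀⟩ := eventually_atTop.mp <|
    (tendsto_natCast_atTop_atTop.eventually
      (eventually_mul_log_le_mul_log_rpow ha hδ (2 * β + 6))).and
    (tendsto_natCast_atTop_atTop.eventually_ge_atTop (4 * c₂))
  have hC : 0 < 2 * π ^ 2 / 3 * c₂ := by positivity
  refine ⟨2 * π ^ 2 / 3 * c₂, hC, exp (-(2 * π ^ 2 / 3 * c₂)), exp_pos _,
    max K₀ 2, le_max_right _ _, fun K hK ε hε => ?_⟩
  have hK1 : (1 : ℝ) ≤ K := by exact_mod_cast (show 1 ≤ K by omega)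
  set σK := exp (-a * log K ^ (1 + δ))
  have hσK : σK ≤ 1 := exp_le_one_iff.mpr (by nlinarith [rpow_nonneg (log_nonneg hK1) (1 + δ)])
  have hv : ∀ k : ℕ, K < k → 2 * (∫ u in Set.Ioi (ε / (D * exp (-a * log k ^ (1 + δ)) *
      √k * log k)), h u) ≤ 2 * c₂ * σK / (k : ℝ) ^ 2 := fun k hk => by
    have : _ ≤ c₂ * σK * ((k : ℝ) ^ 2)⁻¹ := tail_le_of_decay htail hc₂.le ha.le (by linarith)
      hβ.le hK1 (by exact_mod_cast hk) hD hε (hK₀ k (by omega)).1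
    linarith [show 2 * c₂ * σK / (k : ℝ) ^ 2 = 2 * (c₂ * σK * ((k : ℝ) ^ 2)⁻¹) by ring]
  have hhalf : ∀ k : ℕ, K < k → 2 * c₂ * σK / (k : ℝ) ^ 2 ≤ 1 / 2 := fun k hk => by
    have hk4 : 4 * c₂ ≤ k := (hK₀ k (by omega)).2
    have hk1 : (1 : ℝ) ≤ k := by exact_mod_cast (show 1 ≤ k by omega)
    rw [div_le_iff₀ (by positivity)]
    nlinarith [exp_pos (-a * log K ^ (1 + δ))]
  have hmain := exp_neg_le_tprod_ite_one_sub (by positivity)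
    (fun k _ => mul_nonneg zero_le_two
      (MeasureTheory.setIntegral_nonneg measurableSet_Ioi fun x _ => (hpos x).le))
    hv fun k hk => (hv k hk).trans (hhalf k hk)
  rw [show -(π ^ 2 / 3 * (2 * c₂ * σK)) = -(2 * π ^ 2 / 3 * c₂) * σK by ring] at hmain
  have hCσ := mul_le_of_le_one_right hC.le hσK
  exact ⟨hmain, hmain.trans' (exp_le_exp.mpr (by linarith))⟩

/-- High-frequency prior-mass factor for the oversmoothed heavy-tailed (OT) series prior:
with `σ_k = exp(−a (log k)^{1+δ})` and tail `H̄(x) ≤ c₂/x²` for `x ≥ 1`,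
`∏_{k>K} (1 − 2H̄(ε/(D σ_k √k log k))) ≥ exp(−C e^{−a (log K)^{1+δ}})`, which is in
particular bounded below by a positive constant independent of `K`. -/
theorem OT_highfreq_prior_mass
    (h : ℝ → ℝ) (c₂ a δ β : ℝ) (hc₂ : 0 < c₂) (ha : 0 < a) (hδ : 0 < δ) (hβ : 0 < β)
    (hsymm : ∀ x, h (-x) = h x) (hpos : ∀ x, 0 < h x)
    (hbdd : ∃ M, ∀ x, h x ≤ M) (hmono : AntitoneOn h (Set.Ici 0))
    (hmeas : Measurable h) (hprob : ∫ x : ℝ, h x = 1)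
    (htail : ∀ x : ℝ, 1 ≤ x → (∫ u in Set.Ioi x, h u) ≤ c₂ / x ^ 2) :
    ∀ D : ℝ, 0 < D → ∃ C : ℝ, 0 < C ∧ ∃ c : ℝ, 0 < c ∧ ∃ K₀ : ℕ, 2 ≤ K₀ ∧
      ∀ K : ℕ, K₀ ≤ K → ∀ ε : ℝ, D * (K : ℝ) ^ (-β) ≤ ε →
        (∏' k : ℕ, (if K < k then
            1 - 2 * (∫ u in Set.Ioi (ε / (D * Real.exp (-a * Real.log k ^ (1 + δ)) *
              Real.sqrt k * Real.log k)), h u)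
          else 1)) ≥ Real.exp (-C * Real.exp (-a * Real.log K ^ (1 + δ))) ∧
        (∏' k : ℕ, (if K < k then
            1 - 2 * (∫ u in Set.Ioi (ε / (D * Real.exp (-a * Real.log k ^ (1 + δ)) *
              Real.sqrt k * Real.log k)), h u)
          else 1)) ≥ c :=
  OT_highfreq_prior_mass_general h c₂ a δ β hc₂ ha hδ hβ hpos htail
end

section
/- Let v, w be bounded measurable functions on [0,1]^d and define densities p_v = e^v / ∫ e^v, p_w = e^w / ∫ e^w (with respect to Lebesgue measure on [0,1]^d). Then the Kullback–Leibler divergence satisfies K(p_v, p_w) ≤ C ‖v − w‖_∞² (1 + ‖v − w‖_∞) e^{‖v−w‖_∞} for a constant C depending only on an upper bound for ‖v − w‖_∞. -/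
/-!
Put `r = log (p_v / p_w) = (v - w) - (log ∫ e^v - log ∫ e^w)`. Comparing the normalizers pointwise
shows that they differ by at most `‖v - w‖_∞` on the log scale, so `|r| ≤ 2 ‖v - w‖_∞`. As
`p_w = p_v e^{-r}` and both densities integrate to `1`,
`K(p_v, p_w) = ∫ p_v r = ∫ p_v (e^{-r} - 1 + r)`, and the elementary inequality
`e^s - 1 - s ≤ s² e^{|s|}` bounds this by `4 ‖v - w‖_∞² e^{2 ‖v - w‖_∞}`; one factor
`e^{‖v - w‖_∞} ≤ e^B` is absorbed into the constant.
-/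

open Real MeasureTheory

theorem Real.exp_sub_one_sub_le_sq_mul_exp_abs (s : ℝ) : exp s - 1 - s ≤ s ^ 2 * exp |s| := by
  have h₁ : exp s - 1 ≤ s * exp s := by
    nlinarith [add_one_le_exp (-s), exp_pos s, exp_neg s, mul_inv_cancel₀ (exp_pos s).ne']
  have h₂ : s * (exp s - 1) ≤ s ^ 2 * exp |s| := by
    rcases le_total 0 s with hs | hs
    · rw [abs_of_nonneg hs]; nlinarith
    · rw [abs_of_nonpos hs]
      nlinarith [add_one_le_exp s, add_one_le_exp (-s), sq_nonneg s]
  nlinarith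

theorem Real.mul_log_div_le {p q K : ℝ} (hp : 0 < p) (hq : 0 < q) (hK : |log (p / q)| ≤ K) :
    p * log (p / q) ≤ p - q + K ^ 2 * exp K * p := by
  obtain ⟨r, hr_def⟩ : ∃ r, log (p / q) = r := ⟨_, rfl⟩
  rw [hr_def] at hK ⊢
  have hq_eq : q = p * exp (-r) := by
    rw [exp_neg, ← hr_def, exp_log (div_pos hp hq)]
    field_simp
  have hr2 : r ^ 2 ≤ K ^ 2 := by
    rw [← sq_abs]; exact pow_le_pow_left₀ (abs_nonneg r) hK 2
  have hr : exp (-r) - 1 - (-r) ≤ K ^ 2 * exp K := calc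
    _ ≤ r ^ 2 * exp |r| := by simpa using exp_sub_one_sub_le_sq_mul_exp_abs (-r)
    _ ≤ K ^ 2 * exp K := mul_le_mul hr2 (exp_le_exp.2 hK) (exp_pos _).le (sq_nonneg K)
  rw [hq_eq]
  nlinarith [mul_le_mul_of_nonneg_left hr hp.le]

section Densities

variable {α : Type*} [MeasurableSpace α] {μ : Measure α}

theorem integral_mul_log_div_le {p q : α → ℝ} {K : ℝ} (hp : Integrable p μ) (hq : Integrable q μ)
    (hp_pos : ∀ x, 0 < p x) (hq_pos : ∀ x, 0 < q x)
    (hp_one : ∫ x, p x ∂μ = 1) (hq_one : ∫ x, q x ∂μ = 1)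
    (hK : ∀ x, |log (p x / q x)| ≤ K) :
    ∫ x, p x * log (p x / q x) ∂μ ≤ K ^ 2 * exp K := by
  have hpr : Integrable (fun x => p x * log (p x / q x)) μ :=
    hp.mul_bdd (hp.aemeasurable.div hq.aemeasurable).log.aestronglyMeasurable
      (ae_of_all _ fun x => (Real.norm_eq_abs _).le.trans (hK x))
  calc ∫ x, p x * log (p x / q x) ∂μ ≤ ∫ x, (p x - q x + K ^ 2 * exp K * p x) ∂μ :=
        integral_mono hpr ((hp.sub hq).add (hp.const_mul _))
          fun x => mul_log_div_le (hp_pos x) (hq_pos x) (hK x)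
    _ = K ^ 2 * exp K := by
        rw [integral_add (f := fun x => p x - q x) (hp.sub hq) (hp.const_mul _),
          integral_sub hp hq, integral_const_mul, hp_one, hq_one]
        ring

theorem integrable_exp_of_abs_le [IsFiniteMeasure μ] {v : α → ℝ} {C : ℝ} (hv : Measurable v)
    (hC : ∀ x, |v x| ≤ C) : Integrable (fun x => exp (v x)) μ :=
  .of_bound (measurable_exp.comp hv).aestronglyMeasurable (exp C) <| ae_of_all _ fun x => by
    rw [norm_of_nonneg (exp_pos _).le]
    exact exp_le_exp.2 ((le_abs_self _).trans (hC x))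

/-- The density `p_v` of the paper. -/
noncomputable def expDensity (μ : Measure α) (v : α → ℝ) (x : α) : ℝ :=
  exp (v x) / ∫ y, exp (v y) ∂μ

variable [NeZero μ] {v w : α → ℝ} {M : ℝ}

theorem expDensity_pos (hv : Integrable (fun x => exp (v x)) μ) (x : α) :
    0 < expDensity μ v x :=
  div_pos (exp_pos _) (integral_exp_pos hv)

theorem integral_expDensity (hv : Integrable (fun x => exp (v x)) μ) :
    ∫ x, expDensity μ v x ∂μ = 1 := by
  simp only [expDensity]
  rw [integral_div]
  exact div_self (integral_exp_pos hv).ne'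

theorem log_integral_exp_le_add (hv : Integrable (fun x => exp (v x)) μ)
    (hw : Integrable (fun x => exp (w x)) μ) (h : ∀ x, w x ≤ v x + M) :
    log (∫ x, exp (w x) ∂μ) ≤ log (∫ x, exp (v x) ∂μ) + M := by
  rw [← log_exp M, ← log_mul (integral_exp_pos hv).ne' (exp_pos M).ne']
  refine log_le_log (integral_exp_pos hw) ?_
  calc ∫ x, exp (w x) ∂μ ≤ ∫ x, exp (v x) * exp M ∂μ :=
        integral_mono hw (hv.mul_const _) fun x => by rw [← exp_add]; exact exp_le_exp.2 (h x)
    _ = (∫ x, exp (v x) ∂μ) * exp M := integral_mul_const _ _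

theorem log_expDensity_div_expDensity (hv : Integrable (fun x => exp (v x)) μ)
    (hw : Integrable (fun x => exp (w x)) μ) (x : α) :
    log (expDensity μ v x / expDensity μ w x) =
      v x - w x - (log (∫ y, exp (v y) ∂μ) - log (∫ y, exp (w y) ∂μ)) := by
  have hZv := (integral_exp_pos hv).ne'
  have hZw := (integral_exp_pos hw).ne'
  rw [log_div (expDensity_pos hv x).ne' (expDensity_pos hw x).ne', expDensity, expDensity,
    log_div (exp_pos _).ne' hZv, log_div (exp_pos _).ne' hZw, log_exp, log_exp]
  ring

theorem abs_log_expDensity_div_expDensity_le (hv : Integrable (fun x => exp (v x)) μ)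
    (hw : Integrable (fun x => exp (w x)) μ) (h : ∀ x, |v x - w x| ≤ M) (x : α) :
    |log (expDensity μ v x / expDensity μ w x)| ≤ 2 * M := by
  have hvw := log_integral_exp_le_add hv hw fun x => by linarith [(abs_le.1 (h x)).1]
  have hwv := log_integral_exp_le_add hw hv fun x => by linarith [(abs_le.1 (h x)).2]
  rw [log_expDensity_div_expDensity hv hw, abs_le]
  constructor <;> linarith [abs_le.1 (h x)]

theorem integral_expDensity_mul_log_div_le (hv : Integrable (fun x => exp (v x)) μ)
    (hw : Integrable (fun x => exp (w x)) μ) (h : ∀ x, |v x - w x| ≤ M) :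
    ∫ x, expDensity μ v x * log (expDensity μ v x / expDensity μ w x) ∂μ ≤
      (2 * M) ^ 2 * exp (2 * M) :=
  integral_mul_log_div_le (hv.div_const _) (hw.div_const _) (expDensity_pos hv)
    (expDensity_pos hw) (integral_expDensity hv) (integral_expDensity hw)
    (abs_log_expDensity_div_expDensity_le hv hw h)

end Densities

theorem kl_exp_densities_bound_general (B : ℝ) :
    ∃ C : ℝ, 0 < C ∧
      ∀ (d : ℕ) (v w : (Fin d → ℝ) → ℝ), Measurable v → Measurable w →
      ∀ Mv : ℝ, (∀ x, |v x| ≤ Mv) → ∀ Mw : ℝ, (∀ x, |w x| ≤ Mw) →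
      ∀ M : ℝ, (∀ x, |v x - w x| ≤ M) → M ≤ B →
        (∫ x in (Set.univ.pi fun _ : Fin d => Set.Icc (0 : ℝ) 1),
            (Real.exp (v x) /
                ∫ y in (Set.univ.pi fun _ : Fin d => Set.Icc (0 : ℝ) 1), Real.exp (v y)) *
              Real.log
                ((Real.exp (v x) /
                    ∫ y in (Set.univ.pi fun _ : Fin d => Set.Icc (0 : ℝ) 1),
                      Real.exp (v y)) /
                  (Real.exp (w x) /
                    ∫ y in (Set.univ.pi fun _ : Fin d => Set.Icc (0 : ℝ) 1),
                      Real.exp (w y)))) ≤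
          C * M ^ 2 * (1 + M) * Real.exp M := by
  refine ⟨4 * exp B, by positivity, fun d v w hv hw Mv hMv Mw hMw M hM hMB => ?_⟩
  have : IsProbabilityMeasure
      (volume.restrict (Set.univ.pi fun _ : Fin d => Set.Icc (0 : ℝ) 1)) :=
    ⟨by rw [Measure.restrict_apply_univ, volume_pi_pi]; simp⟩
  have hM_nonneg : 0 ≤ M := (abs_nonneg _).trans (hM 0)
  calc _ ≤ (2 * M) ^ 2 * exp (2 * M) :=
        integral_expDensity_mul_log_div_le (integrable_exp_of_abs_le hv hMv)
          (integrable_exp_of_abs_le hw hMw) hM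
    _ = 4 * exp M * M ^ 2 * 1 * exp M := by rw [two_mul M, exp_add]; ring
    _ ≤ 4 * exp B * M ^ 2 * (1 + M) * exp M := by gcongr; linarith

/-- KL bound for exponentiated densities (Lemma 3.1 of van der Vaart–van Zanten):
for bounded measurable `v, w` on `[0,1]^d` and `p_v = e^v/∫e^v`,
`K(p_v, p_w) ≤ C ‖v−w‖_∞²(1+‖v−w‖_∞)e^{‖v−w‖_∞}` with `C` depending only on an
upper bound `B` for `‖v−w‖_∞`. -/
theorem kl_exp_densities_bound (B : ℝ) (hB : 0 < B) :
    ∃ C : ℝ, 0 < C ∧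
      ∀ (d : ℕ) (v w : (Fin d → ℝ) → ℝ), Measurable v → Measurable w →
      ∀ Mv : ℝ, (∀ x, |v x| ≤ Mv) → ∀ Mw : ℝ, (∀ x, |w x| ≤ Mw) →
      ∀ M : ℝ, (∀ x, |v x - w x| ≤ M) → M ≤ B →
        (∫ x in (Set.univ.pi fun _ : Fin d => Set.Icc (0 : ℝ) 1),
            (Real.exp (v x) /
                ∫ y in (Set.univ.pi fun _ : Fin d => Set.Icc (0 : ℝ) 1), Real.exp (v y)) *
              Real.log
                ((Real.exp (v x) /
                    ∫ y in (Set.univ.pi fun _ : Fin d => Set.Icc (0 : ℝ) 1),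
                      Real.exp (v y)) /
                  (Real.exp (w x) /
                    ∫ y in (Set.univ.pi fun _ : Fin d => Set.Icc (0 : ℝ) 1),
                      Real.exp (w y)))) ≤
          C * M ^ 2 * (1 + M) * Real.exp M :=
  kl_exp_densities_bound_general B
end

section
/- Let Λ(u) = 1/(1+e^{-u}) be the logistic function, let G be a probability measure on a set X, and for measurable v, w : X → ℝ define the binary models h_v = Λ∘v, h_w = Λ∘w with joint densities p_v(x,y) = h_v(x)^y (1−h_v(x))^{1−y} g(x) relative to (G-density g) × counting measure on {0,1}. Then K(p_v, p_w) ≤ C ∫ (v − w)² dG for a universal constant C; in particular K(p_v, p_w) ≤ C ‖v − w‖_∞². -/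
/-!
With `p = Λ(a)`, the Bernoulli divergence `K(Λ(a), Λ(b))` is the increment `H(b) - H(a)` of the
cross entropy `H(t) = -(p log Λ(t) + (1 - p) log (1 - Λ(t)))`. Its derivative `Λ(t) - Λ(a)`
vanishes at `a` and is `1/4`-Lipschitz since `Λ' = Λ (1 - Λ) ≤ 1/4`, so the mean value theorem
gives `|K(Λ(a), Λ(b))| ≤ (a - b)² / 4`. Integrating in `x` against `G` yields `C = 1/4`.
-/

open Real MeasureTheory

/-- The logistic function `Λ(u) = 1/(1+e^{-u})`. -/
noncomputable def logisticFn (u : ℝ) : ℝ := 1 / (1 + Real.exp (-u))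

lemma logisticFn_eq_sigmoid : logisticFn = sigmoid := by
  ext u
  rw [logisticFn, sigmoid_def, one_div]

lemma mul_one_sub_le_one_fourth (p : ℝ) : p * (1 - p) ≤ 1 / 4 := by
  nlinarith [sq_nonneg (p - 1 / 2)]

lemma lipschitzWith_sigmoid : LipschitzWith (1 / 4) sigmoid := by
  refine lipschitzWith_of_nnnorm_deriv_le differentiable_sigmoid fun x => ?_
  rw [deriv_sigmoid, ← NNReal.coe_le_coe, coe_nnnorm, Real.norm_eq_abs,
    abs_of_pos (mul_pos (sigmoid_pos x) (sub_pos.2 (sigmoid_lt_one x)))]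
  simpa using mul_one_sub_le_one_fourth (sigmoid x)

lemma hasDerivAt_log_sigmoid (t : ℝ) :
    HasDerivAt (fun t => log (sigmoid t)) (1 - sigmoid t) t := by
  convert (hasDerivAt_sigmoid t).log (sigmoid_pos t).ne' using 1
  field_simp [(sigmoid_pos t).ne']

lemma hasDerivAt_log_one_sub_sigmoid (t : ℝ) :
    HasDerivAt (fun t => log (1 - sigmoid t)) (-sigmoid t) t := by
  have h := (hasDerivAt_log_sigmoid (-t)).comp t (hasDerivAt_neg t)
  simp only [Function.comp_def, sigmoid_neg] at h
  exact h.congr_deriv (by ring)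

noncomputable def klBernoulli (p q : ℝ) : ℝ :=
  p * log (p / q) + (1 - p) * log ((1 - p) / (1 - q))

noncomputable def crossEntropySigmoid (p t : ℝ) : ℝ :=
  -(p * log (sigmoid t) + (1 - p) * log (1 - sigmoid t))

lemma hasDerivAt_crossEntropySigmoid (p t : ℝ) :
    HasDerivAt (crossEntropySigmoid p) (sigmoid t - p) t := by
  refine (((hasDerivAt_log_sigmoid t).const_mul p).add
    ((hasDerivAt_log_one_sub_sigmoid t).const_mul (1 - p))).neg.congr_deriv ?_
  ring

lemma klBernoulli_sigmoid (a b : ℝ) :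
    klBernoulli (sigmoid a) (sigmoid b) =
      crossEntropySigmoid (sigmoid a) b - crossEntropySigmoid (sigmoid a) a := by
  have hσ (t : ℝ) : sigmoid t ≠ 0 := (sigmoid_pos t).ne'
  have hσ' (t : ℝ) : 1 - sigmoid t ≠ 0 := (sub_pos.2 (sigmoid_lt_one t)).ne'
  rw [klBernoulli, crossEntropySigmoid, crossEntropySigmoid, log_div (hσ a) (hσ b),
    log_div (hσ' a) (hσ' b)]
  ring

lemma abs_sub_le_mul_sq_of_abs_deriv_le {f f' : ℝ → ℝ} {a b L : ℝ} (hL : 0 ≤ L)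
    (hf : ∀ t, HasDerivAt f (f' t) t) (hf' : ∀ t, |f' t| ≤ L * |t - a|) :
    |f b - f a| ≤ L * (b - a) ^ 2 := by
  have hbound : ∀ t ∈ Set.uIcc a b, ‖f' t‖ ≤ L * |b - a| := fun t ht =>
    (hf' t).trans <| mul_le_mul_of_nonneg_left (by
      simpa [Real.dist_eq, abs_sub_comm] using Real.dist_le_of_mem_uIcc ht Set.left_mem_uIcc) hL
  have := (convex_uIcc a b).norm_image_sub_le_of_norm_hasDerivWithin_le
    (fun t _ => (hf t).hasDerivWithinAt) hbound Set.left_mem_uIcc Set.right_mem_uIcc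
  rw [Real.norm_eq_abs, Real.norm_eq_abs, mul_assoc, ← sq, sq_abs] at this
  exact this

lemma abs_klBernoulli_sigmoid_le (a b : ℝ) :
    |klBernoulli (sigmoid a) (sigmoid b)| ≤ 1 / 4 * (a - b) ^ 2 := by
  rw [klBernoulli_sigmoid, sub_sq_comm]
  refine abs_sub_le_mul_sq_of_abs_deriv_le (by norm_num)
    (hasDerivAt_crossEntropySigmoid _) fun t => ?_
  simpa [Real.dist_eq] using lipschitzWith_sigmoid.dist_le_mul t a

lemma integral_sq_le_sq_of_abs_le {X : Type*} [MeasurableSpace X] {μ : Measure X}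
    [IsProbabilityMeasure μ] {f : X → ℝ} {M : ℝ} (h : ∀ᵐ x ∂μ, |f x| ≤ M) :
    ∫ x, f x ^ 2 ∂μ ≤ M ^ 2 := by
  have := integral_mono_of_nonneg (ae_of_all _ fun x => sq_nonneg (f x))
    (integrable_const (M ^ 2)) (h.mono fun x hx => sq_le_sq' (abs_le.1 hx).1 (abs_le.1 hx).2)
  simpa using this

/-- KL bound for binary classification with logistic link (Lemma 3.2 of
van der Vaart–van Zanten, logistic case): the KL divergence between the joint laws of
`(X,Y)` with `X ~ G` and `P(Y=1|X=x) = Λ(v(x))` resp. `Λ(w(x))` satisfies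
`K(p_v, p_w) ≤ C ∫ (v−w)² dG ≤ C ‖v−w‖_∞²` for a universal constant `C`. -/
theorem kl_logistic_bound :
    ∃ C : ℝ, 0 < C ∧
      ∀ (X : Type) [MeasurableSpace X] (G : Measure X), IsProbabilityMeasure G →
      ∀ v w : X → ℝ, Measurable v → Measurable w →
        Integrable (fun x => (v x - w x) ^ 2) G →
        ((∫ x, (logisticFn (v x) * Real.log (logisticFn (v x) / logisticFn (w x)) +
              (1 - logisticFn (v x)) *
                Real.log ((1 - logisticFn (v x)) / (1 - logisticFn (w x)))) ∂G) ≤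
            C * ∫ x, (v x - w x) ^ 2 ∂G) ∧
          ∀ M : ℝ, (∀ x, |v x - w x| ≤ M) →
            (∫ x, (logisticFn (v x) * Real.log (logisticFn (v x) / logisticFn (w x)) +
                (1 - logisticFn (v x)) *
                  Real.log ((1 - logisticFn (v x)) / (1 - logisticFn (w x)))) ∂G) ≤
              C * M ^ 2 := by
  refine ⟨1 / 4, by norm_num, fun X _ G _ v w _ _ hInt => ?_⟩
  simp only [logisticFn_eq_sigmoid]
  have hKL : ∫ x, klBernoulli (sigmoid (v x)) (sigmoid (w x)) ∂G ≤
      1 / 4 * ∫ x, (v x - w x) ^ 2 ∂G := by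
    rw [← integral_const_mul]
    refine (le_abs_self _).trans ?_
    rw [← Real.norm_eq_abs]
    exact norm_integral_le_of_norm_le (hInt.const_mul _)
      (ae_of_all _ fun x => abs_klBernoulli_sigmoid_le (v x) (w x))
  refine ⟨hKL, fun M hM => hKL.trans ?_⟩
  gcongr
  exact integral_sq_le_sq_of_abs_le (ae_of_all _ hM)
end
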